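/- arXiv:0811.4204 — 10 statements merged into one kernel-verified Lean document; each statement's English description precedes it below -/
import Mathlib

section
/- A homomorphism $\omega\colon B_k \to S_n$ is cyclic (i.e. its image is a cyclic subgroup of $S_n$) if and only if $\omega(\sigma_i) = \omega(\sigma_{i+1})$ for some $i\in\{1,\ldots,k-2\}$, if and only if $\omega(\sigma_1)=\cdots=\omega(\sigma_{k-1})$. -/
/-- A homomorphism `ω : B_k → S_n` (encoded by the images `s 1, …, s (k-1)` of the
standard generators, which satisfy the braid relations) is cyclic (its image, the
subgroup generated by the images of the generators, is a cyclic subgroup of `S_n`)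
iff `s i = s (i+1)` for some `1 ≤ i ≤ k-2`, iff `s 1 = ⋯ = s (k-1)`. -/
theorem braidHom_cyclic_iff (k n : ℕ) (hk : 3 ≤ k)
    (s : ℕ → Equiv.Perm (Fin n))
    (hbraid : ∀ i, 1 ≤ i → i + 1 ≤ k - 1 →
      s i * s (i + 1) * s i = s (i + 1) * s i * s (i + 1))
    (hcomm : ∀ i j, 1 ≤ i → j ≤ k - 1 → i + 2 ≤ j → s i * s j = s j * s i) :
    (IsCyclic ↥(Subgroup.closure {g : Equiv.Perm (Fin n) | ∃ i, 1 ≤ i ∧ i ≤ k - 1 ∧ g = s i})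
      ↔ ∃ i, 1 ≤ i ∧ i ≤ k - 2 ∧ s i = s (i + 1)) ∧
    ((∃ i, 1 ≤ i ∧ i ≤ k - 2 ∧ s i = s (i + 1))
      ↔ ∀ i, 1 ≤ i → i ≤ k - 1 → s i = s 1) := by
  -- cancellation: a braid relation plus commutation forces equality
  have cancel : ∀ a b : Equiv.Perm (Fin n),
      a * b * a = b * a * b → a * b = b * a → a = b := by
    intro a b hbr hco
    have h1 : a * b * a = b * a * a := by rw [hco]
    exact mul_left_cancel (h1.symm.trans hbr)
  -- upward propagation
  have hup : ∀ j, 1 ≤ j → j + 1 ≤ k - 2 → s j = s (j + 1) → s (j + 1) = s (j + 2) := by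
    intro j h1 h2 he
    have hc := hcomm j (j + 2) h1 (by omega) (by omega)
    rw [he] at hc
    have hb := hbraid (j + 1) (by omega) (by omega)
    have e : j + 1 + 1 = j + 2 := by omega
    rw [e] at hb
    exact cancel _ _ hb hc
  -- downward propagation
  have hdown : ∀ j, 1 ≤ j → j + 1 ≤ k - 2 → s (j + 1) = s (j + 2) → s j = s (j + 1) := by
    intro j h1 h2 he
    have hc := hcomm j (j + 2) h1 (by omega) (by omega)
    rw [← he] at hc
    have hb := hbraid j h1 (by omega)
    exact cancel _ _ hb hc
  -- one adjacent equality propagates to all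
  have hprop : (∃ i, 1 ≤ i ∧ i ≤ k - 2 ∧ s i = s (i + 1)) →
      ∀ j, 1 ≤ j → j ≤ k - 2 → s j = s (j + 1) := by
    rintro ⟨i, hi1, hi2, he⟩ j hj1 hj2
    have up : ∀ d, i + d ≤ k - 2 → s (i + d) = s (i + d + 1) := by
      intro d
      induction d with
      | zero => intro _; simpa using he
      | succ m ih =>
        intro hm
        have prev := ih (by omega)
        have := hup (i + m) (by omega) (by omega) prev
        have e1 : i + m + 1 = i + (m + 1) := by omega
        have e2 : i + m + 2 = i + (m + 1) + 1 := by omega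
        rw [e1, e2] at this
        exact this
    have down : ∀ d, d ≤ i - 1 → s (i - d) = s (i - d + 1) := by
      intro d
      induction d with
      | zero => intro _; simpa using he
      | succ m ih =>
        intro hm
        have prev := ih (by omega)
        have e1 : i - m = i - (m + 1) + 1 := by omega
        have e2 : i - (m + 1) + 1 + 1 = i - (m + 1) + 2 := by omega
        rw [e1, e2] at prev
        exact hdown (i - (m + 1)) (by omega) (by omega) prev
    by_cases h : j ≤ i
    · have := down (i - j) (by omega)
      have e : i - (i - j) = j := by omega
      rw [e] at this
      exact this
    · have := up (j - i) (by omega)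
      have e : i + (j - i) = j := by omega
      rw [e] at this
      exact this
  -- the second iff
  have hAB : (∃ i, 1 ≤ i ∧ i ≤ k - 2 ∧ s i = s (i + 1))
      ↔ ∀ i, 1 ≤ i → i ≤ k - 1 → s i = s 1 := by
    constructor
    · intro hA i hi1 hi2
      have f := hprop hA
      induction i with
      | zero => omega
      | succ m ih =>
        rcases Nat.eq_zero_or_pos m with hm | hm
        · subst hm; rfl
        · have h1 := f m (by omega) (by omega)
          exact h1.symm.trans (ih (by omega) (by omega))
    · intro hB
      refine ⟨1, le_rfl, by omega, ?_⟩
      have h1 : s 2 = s 1 := hB 2 (by omega) (by omega)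
      have e : (1 : ℕ) + 1 = 2 := rfl
      rw [e, h1]
  refine ⟨?_, hAB⟩
  constructor
  · intro hcyc
    have h1mem : s 1 ∈ Subgroup.closure
        {g : Equiv.Perm (Fin n) | ∃ i, 1 ≤ i ∧ i ≤ k - 1 ∧ g = s i} :=
      Subgroup.subset_closure ⟨1, le_rfl, by omega, rfl⟩
    have h2mem : s 2 ∈ Subgroup.closure
        {g : Equiv.Perm (Fin n) | ∃ i, 1 ≤ i ∧ i ≤ k - 1 ∧ g = s i} :=
      Subgroup.subset_closure ⟨2, by omega, by omega, rfl⟩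
    letI := hcyc.commGroup
    have hcm : (⟨s 1, h1mem⟩ * ⟨s 2, h2mem⟩ :
        ↥(Subgroup.closure {g : Equiv.Perm (Fin n) | ∃ i, 1 ≤ i ∧ i ≤ k - 1 ∧ g = s i}))
        = ⟨s 2, h2mem⟩ * ⟨s 1, h1mem⟩ := mul_comm _ _
    have hc : s 1 * s 2 = s 2 * s 1 := congrArg Subtype.val hcm
    have hb := hbraid 1 le_rfl (by omega)
    have e : (1 : ℕ) + 1 = 2 := rfl
    rw [e] at hb
    exact ⟨1, le_rfl, by omega, by rw [e]; exact cancel _ _ hb hc⟩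
  · intro hA
    have hB := hAB.mp hA
    have hSeq : {g : Equiv.Perm (Fin n) | ∃ i, 1 ≤ i ∧ i ≤ k - 1 ∧ g = s i} = {s 1} := by
      ext g
      constructor
      · rintro ⟨i, hi1, hi2, rfl⟩
        exact hB i hi1 hi2
      · rintro rfl
        exact ⟨1, le_rfl, by omega, rfl⟩
    rw [hSeq, ← Subgroup.zpowers_eq_closure]
    refine ⟨⟨⟨s 1, Subgroup.mem_zpowers _⟩, ?_⟩⟩
    intro x
    obtain ⟨m, hm⟩ := Subgroup.mem_zpowers_iff.mp x.2
    exact ⟨m, Subtype.ext (by simpa using hm)⟩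
end

section
/- With notation as before ($m,r\ge2$, $A^m_i$ the $m$-cycle on the $i$-th block, $C=C^{\sigma,m}_{t_1,\ldots,t_r}$ defined by $C(a^i_j)=a^{\sigma(i)}_{|j+t_{\sigma(i)}|_m}$), if $\sigma\in S_r$ is an $r$-cycle, then the cycle decomposition of $C$ consists of exactly $m/l$ cycles, each of length $lr$, where $l$ is the minimal integer with $1\le l\le m$ such that $l\cdot\sum_{j=0}^{r-1} t_j \equiv 0 \pmod m$. -/
private lemma fixPow {α : Type*} (D : Equiv.Perm α) (x : α) (h : D x = x) :
    ∀ q : ℕ, (D ^ q) x = x := by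
  intro q
  induction q with
  | zero => rfl
  | succ n ih => rw [pow_succ, Equiv.Perm.mul_apply, h, ih]

private lemma fixZpow {α : Type*} (D : Equiv.Perm α) (x : α) (h : D x = x) :
    ∀ z : ℤ, (D ^ z) x = x := by
  intro z
  cases z with
  | ofNat n => rw [Int.ofNat_eq_coe, zpow_natCast]; exact fixPow D x h n
  | negSucc n =>
      rw [zpow_negSucc, Equiv.Perm.inv_eq_iff_eq]
      exact (fixPow D x h (n + 1)).symm

private lemma exists_mul_mod (m T : ℕ) (hm : 0 < m) (x : ℕ)
    (hx : Nat.gcd m T ∣ x) : ∃ q : ℕ, (q * T) % m = x % m := by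
  obtain ⟨c, hc⟩ := hx
  have hb := Nat.gcd_eq_gcd_ab m T
  set A := Nat.gcdA m T
  set B := Nat.gcdB m T
  have hm' : (0:ℤ) < m := by exact_mod_cast hm
  refine ⟨((B * c) % m).toNat, ?_⟩
  have h1 : (((B * c) % (m:ℤ)).toNat : ℤ) = (B * c) % m :=
    Int.toNat_of_nonneg (Int.emod_nonneg _ (by omega))
  have h2 : ((((B * c) % (m:ℤ)).toNat * T : ℕ) : ℤ) % m = (x : ℤ) % m := by
    push_cast [h1]
    have e1 : ((B * c) % (m:ℤ) * T) % m = (B * c * T) % m := by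
      rw [Int.mul_emod, Int.emod_emod_of_dvd _ dvd_rfl, ← Int.mul_emod]
    rw [e1]
    have e2 : (x : ℤ) = B * c * T + m * (A * c) := by
      have : (x : ℤ) = (Nat.gcd m T : ℤ) * c := by exact_mod_cast congrArg (Nat.cast : ℕ → ℤ) hc
      rw [this, hb]; ring
    rw [e2, Int.add_mul_emod_self_left]
  exact_mod_cast h2

/-- With `C = C^{σ,m}_{t₁,…,t_r}` (the block-shift permutation, encoded by its defining
formula on the blocks `a i p = 1+m(i-1)+p` and fixing everything else), if `σ` is an
`r`-cycle on `{1,…,r}`, then the cycle decomposition of `C` consists of exactly `m/l`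
cycles, each of length `l*r`, where `l` is the minimal integer `1 ≤ l ≤ m` with
`l * ∑ t_i ≡ 0 (mod m)`: every point of a block lies on a cycle of `C` of length `l*r`
(its minimal period is `l*r`), and there is a set of `m/l` representatives meeting each
such cycle exactly once. -/
theorem blockShift_cycle_structure (m r : ℕ) (hm : 2 ≤ m) (hr : 2 ≤ r)
    (σ : Equiv.Perm ℕ) (hσ : ∀ i, i < 1 ∨ r < i → σ i = i)
    (hσcyc : ∀ i₀ i, 1 ≤ i₀ → i₀ ≤ r → 1 ≤ i → i ≤ r → ∃ n : ℕ, (σ ^ n) i₀ = i)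
    (t : ℕ → ℕ) (ht : ∀ i, t i < m)
    (C : Equiv.Perm ℕ)
    (hC : ∀ i p, 1 ≤ i → i ≤ r → p < m →
      C (1 + m * (i - 1) + p) = 1 + m * (σ i - 1) + (p + t (σ i)) % m)
    (hCfix : ∀ x, (∀ i p, 1 ≤ i → i ≤ r → p < m → x ≠ 1 + m * (i - 1) + p) → C x = x)
    (l : ℕ) (hl1 : 1 ≤ l) (hl2 : l ≤ m)
    (hl3 : (l * ∑ i ∈ Finset.Icc 1 r, t i) % m = 0)
    (hlmin : ∀ l', 1 ≤ l' → (l' * ∑ i ∈ Finset.Icc 1 r, t i) % m = 0 → l ≤ l') :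
    (∀ i p, 1 ≤ i → i ≤ r →  p < m →
      Function.minimalPeriod (⇑C) (1 + m * (i - 1) + p) = l * r) ∧
    ∃ reps : Finset ℕ, reps.card = m / l ∧
      ∀ i p, 1 ≤ i → i ≤ r → p < m →
        ∃! y, y ∈ reps ∧ C.SameCycle y (1 + m * (i - 1) + p) := by
  have hm0 : 0 < m := by omega
  set T := ∑ i ∈ Finset.Icc 1 r, t i with hTdef
  ---- Arithmetic facts about l and g := m / l
  have hdvdl : ∀ q : ℕ, (q * T) % m = 0 → l ∣ q := by
    intro q hq
    rcases Nat.eq_zero_or_pos q with h0 | h0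
    · simp [h0]
    have h1 : m ∣ q * T := Nat.dvd_of_mod_eq_zero hq
    have h2 : m ∣ l * T := Nat.dvd_of_mod_eq_zero hl3
    have h3 : m ∣ Nat.gcd q l * T := by
      rw [← Nat.gcd_mul_right]; exact Nat.dvd_gcd h1 h2
    have h3' : (Nat.gcd q l * T) % m = 0 := Nat.mod_eq_zero_of_dvd h3
    have h4 : l ≤ Nat.gcd q l := hlmin _ (Nat.gcd_pos_of_pos_left l h0) h3'
    have h5 : Nat.gcd q l ≤ l := Nat.le_of_dvd (by omega) (Nat.gcd_dvd_right q l)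
    have h6 : Nat.gcd q l = l := by omega
    rw [← h6]
    exact Nat.gcd_dvd_left q l
  have hlm : l ∣ m := hdvdl m (Nat.mul_mod_right m T)
  set g := m / l with hgdef
  have hgl : g * l = m := Nat.div_mul_cancel hlm
  have hgm : g ∣ m := ⟨l, hgl.symm⟩
  have hgT : g ∣ T := by
    have h2 : m ∣ l * T := Nat.dvd_of_mod_eq_zero hl3
    obtain ⟨c, hc⟩ := h2
    refine ⟨c, ?_⟩
    have : l * T = l * (g * c) := by rw [hc, ← hgl]; ring
    exact Nat.eq_of_mul_eq_mul_left (by omega) this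
  have hg0 : 0 < g := Nat.div_pos hl2 (by omega)
  have hgle : g ≤ m := Nat.div_le_self m l
  have hGg : Nat.gcd m T = g := by
    apply Nat.dvd_antisymm
    · set G := Nat.gcd m T with hG
      have hG0 : 0 < G := Nat.gcd_pos_of_pos_left T hm0
      have hGm : G ∣ m := Nat.gcd_dvd_left m T
      have hGT : G ∣ T := Nat.gcd_dvd_right m T
      have h5 : (m / G * T) % m = 0 := by
        apply Nat.mod_eq_zero_of_dvd
        obtain ⟨u, hu⟩ := hGT
        refine ⟨u, ?_⟩
        rw [hu, ← Nat.mul_assoc, Nat.div_mul_cancel hGm]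
      have h6 : l ∣ m / G := hdvdl _ h5
      obtain ⟨k, hk⟩ := h6
      refine ⟨k, ?_⟩
      have hmk : m = G * (l * k) := by rw [← hk, Nat.mul_div_cancel' hGm]
      rw [hgdef, hmk, Nat.mul_comm G (l * k),
        show l * k * G = l * (G * k) by ring]
      exact Nat.mul_div_cancel_left _ (by omega)
    · exact Nat.dvd_gcd hgm hgT
  ---- σ-facts
  have hσmem : ∀ i, 1 ≤ i → i ≤ r → 1 ≤ σ i ∧ σ i ≤ r := by
    intro i h1 h2
    by_contra hcon
    have h' : σ i < 1 ∨ r < σ i := by omega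
    have hfix := hσ (σ i) h'
    have := σ.injective hfix
    omega
  have hσpow : ∀ n i, 1 ≤ i → i ≤ r → 1 ≤ (σ ^ n) i ∧ (σ ^ n) i ≤ r := by
    intro n
    induction n with
    | zero => intro i h1 h2; simpa using ⟨h1, h2⟩
    | succ n ih =>
        intro i h1 h2
        rw [pow_succ, Equiv.Perm.mul_apply]
        exact ih _ (hσmem i h1 h2).1 (hσmem i h1 h2).2
  have hdiff : ∀ (n₁ n₂ i : ℕ), n₁ ≤ n₂ → (σ ^ n₁) i = (σ ^ n₂) i → (σ ^ (n₂ - n₁)) i = i := by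
    intro n₁ n₂ i hle heq
    apply (σ ^ n₁).injective
    rw [← Equiv.Perm.mul_apply, ← pow_add, Nat.add_sub_cancel' hle]
    exact heq.symm
  have hperiod : ∀ i, 1 ≤ i → i ≤ r → Function.minimalPeriod (⇑σ) i = r := by
    intro i h1 h2
    have hmaps : ∀ n ∈ Finset.range (r + 1), (σ ^ n) i ∈ Finset.Icc 1 r := by
      intro n _
      exact Finset.mem_Icc.2 ⟨(hσpow n i h1 h2).1, (hσpow n i h1 h2).2⟩
    have hcard : (Finset.Icc 1 r).card < (Finset.range (r + 1)).card := by
      simp [Nat.card_Icc]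
    obtain ⟨n₁, hn₁, n₂, hn₂, hne, heq⟩ :=
      Finset.exists_ne_map_eq_of_card_lt_of_maps_to hcard hmaps
    have hpp : i ∈ Function.periodicPts (⇑σ) := by
      rcases Nat.lt_or_ge n₁ n₂ with hlt | hge
      · refine ⟨n₂ - n₁, by omega, ?_⟩
        show (⇑σ)^[n₂ - n₁] i = i
        rw [Equiv.Perm.iterate_eq_pow]
        exact hdiff n₁ n₂ i hlt.le heq
      · refine ⟨n₁ - n₂, by omega, ?_⟩
        show (⇑σ)^[n₁ - n₂] i = i
        rw [Equiv.Perm.iterate_eq_pow]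
        exact hdiff n₂ n₁ i hge heq.symm
    have hP0 : 0 < Function.minimalPeriod (⇑σ) i :=
      Function.minimalPeriod_pos_of_mem_periodicPts hpp
    set P := Function.minimalPeriod (⇑σ) i with hP
    have hPle : P ≤ r := by
      have hinj : Set.InjOn (fun n => (⇑σ)^[n] i) (Set.Iio P) :=
        Function.iterate_injOn_Iio_minimalPeriod
      have hc1 : ((Finset.range P).image fun n => (σ ^ n) i).card = P := by
        rw [Finset.card_image_of_injOn, Finset.card_range]
        intro a ha b hb hab
        have ha' : a ∈ Set.Iio P := Finset.mem_range.1 ha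
        have hb' : b ∈ Set.Iio P := Finset.mem_range.1 hb
        apply hinj ha' hb'
        simpa [Equiv.Perm.iterate_eq_pow] using hab
      have hsub : ((Finset.range P).image fun n => (σ ^ n) i) ⊆ Finset.Icc 1 r := by
        intro x hx
        obtain ⟨n, _, rfl⟩ := Finset.mem_image.1 hx
        exact Finset.mem_Icc.2 ⟨(hσpow n i h1 h2).1, (hσpow n i h1 h2).2⟩
      have := Finset.card_le_card hsub
      rw [hc1, Nat.card_Icc] at this
      omega
    have hPge : r ≤ P := by
      have hsub : Finset.Icc 1 r ⊆ (Finset.range P).image fun n => (σ ^ n) i := by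
        intro j hj
        rw [Finset.mem_Icc] at hj
        obtain ⟨n, hn⟩ := hσcyc i j h1 h2 hj.1 hj.2
        refine Finset.mem_image.2 ⟨n % P, Finset.mem_range.2 (Nat.mod_lt _ hP0), ?_⟩
        rw [← hn]
        have := Function.iterate_mod_minimalPeriod_eq (f := ⇑σ) (x := i) (n := n)
        simpa [Equiv.Perm.iterate_eq_pow, ← hP] using this
      have := Finset.card_le_card hsub
      have hle2 := Finset.card_image_le (s := Finset.range P) (f := fun n => (σ ^ n) i)
      rw [Nat.card_Icc] at this
      rw [Finset.card_range] at hle2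
      omega
    omega
  have hpowr : ∀ i, 1 ≤ i → i ≤ r → ∀ n, ((σ ^ n) i = i ↔ r ∣ n) := by
    intro i h1 h2 n
    rw [← hperiod i h1 h2, ← Function.isPeriodicPt_iff_minimalPeriod_dvd]
    constructor
    · intro h
      show (⇑σ)^[n] i = i
      rw [Equiv.Perm.iterate_eq_pow]; exact h
    · intro h
      have : (⇑σ)^[n] i = i := h
      rwa [Equiv.Perm.iterate_eq_pow] at this
  have hprinj : ∀ i, 1 ≤ i → i ≤ r → ∀ a b, a ≤ b → b - a < r → (σ ^ a) i = (σ ^ b) i → a = b := by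
    intro i h1 h2 a b hab hba heq
    have hdv := (hpowr i h1 h2 (b - a)).1 (hdiff a b i hab heq)
    have h0 : b - a = 0 := Nat.eq_zero_of_dvd_of_lt hdv hba
    omega
  ---- sum function
  set s : ℕ → ℕ → ℕ := fun i n => ∑ k ∈ Finset.range n, t ((σ ^ (k + 1)) i) with hsdef
  have hTs : ∀ i, 1 ≤ i → i ≤ r → s i r = T := by
    intro i h1 h2
    rw [hTdef, hsdef]
    refine Finset.sum_bij (fun k _ => (σ ^ (k + 1)) i) ?_ ?_ ?_ ?_
    · intro k hk
      exact Finset.mem_Icc.2 ⟨(hσpow (k+1) i h1 h2).1, (hσpow (k+1) i h1 h2).2⟩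
    · intro k₁ hk₁ k₂ hk₂ hkk
      rw [Finset.mem_range] at hk₁ hk₂
      rcases Nat.le_total k₁ k₂ with hle | hle
      · have := hprinj i h1 h2 (k₁+1) (k₂+1) (by omega) (by omega) hkk
        omega
      · have := hprinj i h1 h2 (k₂+1) (k₁+1) (by omega) (by omega) hkk.symm
        omega
    · intro j hj
      rw [Finset.mem_Icc] at hj
      obtain ⟨n, hn⟩ := hσcyc i j h1 h2 hj.1 hj.2
      have hbase : ∀ a : ℕ, (σ ^ a) i = (σ ^ (a % r)) i := by
        intro a
        conv_lhs => rw [← Nat.mod_add_div a r]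
        rw [pow_add, Equiv.Perm.mul_apply]
        congr 1
        rw [pow_mul]
        exact fixPow (σ ^ r) i ((hpowr i h1 h2 r).2 dvd_rfl) (a / r)
      rcases Nat.eq_zero_or_pos (n % r) with h0 | h0
      · refine ⟨r - 1, Finset.mem_range.2 (by omega), ?_⟩
        show (σ ^ (r - 1 + 1)) i = j
        have hrr : r - 1 + 1 = r := by omega
        rw [hrr, (hpowr i h1 h2 r).2 dvd_rfl, ← hn, hbase n, h0]
        simp
      · refine ⟨n % r - 1, Finset.mem_range.2 (by have := Nat.mod_lt n (show 0 < r by omega); omega), ?_⟩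
        show (σ ^ (n % r - 1 + 1)) i = j
        have hnr : n % r - 1 + 1 = n % r := by omega
        rw [hnr, ← hn, hbase n]
    · intro k hk; rfl
  have hsadd : ∀ i, 1 ≤ i → i ≤ r → ∀ n, s i (n + r) = s i n + T := by
    intro i h1 h2 n
    rw [hsdef]
    simp only []
    rw [Finset.sum_range_add]
    congr 1
    have : ∀ k ∈ Finset.range r, t ((σ ^ (n + k + 1)) i) = t ((σ ^ (k + 1)) ((σ ^ n) i)) := by
      intro k _
      have hnk : n + k + 1 = k + 1 + n := by omega
      rw [hnk, pow_add, Equiv.Perm.mul_apply]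
    rw [Finset.sum_congr rfl this]
    exact hTs ((σ ^ n) i) (hσpow n i h1 h2).1 (hσpow n i h1 h2).2
  have hsmul : ∀ i, 1 ≤ i → i ≤ r → ∀ q, s i (q * r) = q * T := by
    intro i h1 h2 q
    induction q with
    | zero => simp [hsdef]
    | succ q ih =>
        have : (q + 1) * r = q * r + r := by ring
        rw [this, hsadd i h1 h2, ih]
        ring
  ---- iteration formula
  have hiter : ∀ n i p, 1 ≤ i → i ≤ r → p < m →
      (⇑C)^[n] (1 + m * (i - 1) + p) = 1 + m * ((σ ^ n) i - 1) + (p + s i n) % m := by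
    intro n
    induction n with
    | zero =>
        intro i p h1 h2 hp
        simp [hsdef, Nat.mod_eq_of_lt hp]
    | succ n ih =>
        intro i p h1 h2 hp
        rw [Function.iterate_succ_apply', ih i p h1 h2 hp]
        rw [hC _ _ (hσpow n i h1 h2).1 (hσpow n i h1 h2).2 (Nat.mod_lt _ hm0)]
        have e1 : σ ((σ ^ n) i) = (σ ^ (n + 1)) i := by
          rw [pow_succ', Equiv.Perm.mul_apply]
        rw [e1, Nat.mod_add_mod]
        congr 2
        rw [hsdef]
        simp only []
        rw [Finset.sum_range_succ]
        omega
  ---- injectivity of coding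
  have hainj : ∀ i p i' p', 1 ≤ i → 1 ≤ i' → p < m → p' < m →
      1 + m * (i - 1) + p = 1 + m * (i' - 1) + p' → i = i' ∧ p = p' := by
    intro i p i' p' h1 h1' hp hp' heq
    have h0 : m * (i - 1) + p = m * (i' - 1) + p' := by omega
    have d1 := congrArg (· / m) h0
    have d2 := congrArg (· % m) h0
    simp only [Nat.mul_add_div hm0, Nat.mul_add_mod] at d1 d2
    rw [Nat.div_eq_of_lt hp, Nat.div_eq_of_lt hp'] at d1
    rw [Nat.mod_eq_of_lt hp, Nat.mod_eq_of_lt hp'] at d2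
    omega
  ---- mod helper
  have hmodp : ∀ p x : ℕ, p < m → ((p + x) % m = p ↔ x % m = 0) := by
    intro p x hp
    have h1 : (p + x) % m = (p + x % m) % m := by
      conv_lhs => rw [Nat.add_mod]
      rw [Nat.mod_eq_of_lt hp]
    rw [h1]
    have hy : x % m < m := Nat.mod_lt _ hm0
    constructor
    · intro h
      rcases Nat.lt_or_ge (p + x % m) m with hlt | hge
      · rw [Nat.mod_eq_of_lt hlt] at h; omega
      · have h2 : (p + x % m) % m = p + x % m - m := by
          rw [Nat.mod_eq_sub_mod hge, Nat.mod_eq_of_lt (by omega)]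
        rw [h2] at h; omega
    · intro h; rw [h, Nat.add_zero, Nat.mod_eq_of_lt hp]
  ---- fixed point characterization
  have hfixiff : ∀ i p, 1 ≤ i → i ≤ r → p < m → ∀ n,
      ((⇑C)^[n] (1 + m * (i - 1) + p) = 1 + m * (i - 1) + p ↔ r ∣ n ∧ (n / r * T) % m = 0) := by
    intro i p h1 h2 hp n
    rw [hiter n i p h1 h2 hp]
    constructor
    · intro h
      obtain ⟨hi, hpeq⟩ := hainj _ _ _ _ (hσpow n i h1 h2).1 h1 (Nat.mod_lt _ hm0) hp h
      have hrn : r ∣ n := (hpowr i h1 h2 n).1 hi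
      obtain ⟨q, rfl⟩ := hrn
      have hq : s i (r * q) = q * T := by rw [Nat.mul_comm]; exact hsmul i h1 h2 q
      rw [hq] at hpeq
      refine ⟨⟨q, rfl⟩, ?_⟩
      rw [Nat.mul_div_cancel_left q (by omega : 0 < r)]
      exact (hmodp p (q * T) hp).1 hpeq
    · rintro ⟨⟨q, rfl⟩, hq⟩
      rw [Nat.mul_div_cancel_left q (by omega : 0 < r)] at hq
      have hsq : s i (r * q) = q * T := by rw [Nat.mul_comm]; exact hsmul i h1 h2 q
      rw [hsq, (hpowr i h1 h2 (r * q)).2 ⟨q, rfl⟩]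
      congr 1
      exact (hmodp p (q * T) hp).2 hq
  ---- part 1 : minimal period
  have part1 : ∀ i p, 1 ≤ i → i ≤ r → p < m →
      Function.minimalPeriod (⇑C) (1 + m * (i - 1) + p) = l * r := by
    intro i p h1 h2 hp
    have hlr0 : 0 < l * r := Nat.mul_pos (by omega) (by omega)
    have hper : Function.IsPeriodicPt (⇑C) (l * r) (1 + m * (i - 1) + p) := by
      show (⇑C)^[l * r] _ = _
      rw [hfixiff i p h1 h2 hp]
      exact ⟨⟨l, Nat.mul_comm l r⟩, by rw [Nat.mul_div_cancel _ (by omega : 0 < r)]; exact hl3⟩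
    have hdvd2 := hper.minimalPeriod_dvd
    have hn₀pos : 0 < Function.minimalPeriod (⇑C) (1 + m * (i - 1) + p) :=
      hper.minimalPeriod_pos hlr0
    have hn₀fix : (⇑C)^[Function.minimalPeriod (⇑C) (1 + m * (i - 1) + p)]
        (1 + m * (i - 1) + p) = 1 + m * (i - 1) + p :=
      Function.iterate_minimalPeriod
    rw [hfixiff i p h1 h2 hp] at hn₀fix
    obtain ⟨⟨q, hq⟩, hmod⟩ := hn₀fix
    rw [hq] at hmod ⊢
    rw [Nat.mul_div_cancel_left q (by omega : 0 < r)] at hmod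
    have hq1 : 1 ≤ q := by
      rcases Nat.eq_zero_or_pos q with h0 | h0
      · rw [h0, Nat.mul_zero] at hq; omega
      · omega
    have hlq : l ≤ q := hlmin q hq1 hmod
    have hle1 : l * r ≤ r * q := by
      calc l * r = r * l := Nat.mul_comm l r
      _ ≤ r * q := Nat.mul_le_mul_left r hlq
    have hle2 : r * q ≤ l * r := by
      rw [← hq] at hle1 ⊢
      exact Nat.le_of_dvd hlr0 hdvd2
    omega
  refine ⟨part1, ?_⟩
  ---- SameCycle bridge
  have hsc : ∀ x y : ℕ, (⇑C)^[l * r] x = x →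
      (C.SameCycle x y ↔ ∃ n : ℕ, (⇑C)^[n] x = y) := by
    intro x y hx
    have hlr0 : 0 < l * r := Nat.mul_pos (by omega) (by omega)
    constructor
    · rintro ⟨z, hz⟩
      have hD : (C ^ (l * r) : Equiv.Perm ℕ) x = x := by
        rw [← Equiv.Perm.iterate_eq_pow]; exact hx
      have hfixZ : ∀ w : ℤ, (C ^ (((l * r : ℕ) : ℤ) * w)) x = x := by
        intro w
        rw [zpow_mul, zpow_natCast]
        exact fixZpow (C ^ (l * r)) x hD w
      have hnn : (((z % ((l * r : ℕ) : ℤ)).toNat : ℤ)) = z % ((l * r : ℕ) : ℤ) :=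
        Int.toNat_of_nonneg (Int.emod_nonneg _ (Int.natCast_ne_zero.mpr hlr0.ne'))
      refine ⟨(z % ((l * r : ℕ) : ℤ)).toNat, ?_⟩
      have hsplit : (C ^ z) x = (C ^ (z % ((l * r : ℕ) : ℤ))) x := by
        conv_lhs => rw [← Int.emod_add_mul_ediv z ((l * r : ℕ) : ℤ)]
        rw [zpow_add, Equiv.Perm.mul_apply, hfixZ (z / ((l * r : ℕ) : ℤ))]
      rw [Equiv.Perm.iterate_eq_pow, ← zpow_natCast C, hnn, ← hsplit]
      exact hz
    · rintro ⟨n, hn⟩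
      refine ⟨(n : ℤ), ?_⟩
      rw [zpow_natCast, ← Equiv.Perm.iterate_eq_pow]
      exact hn
  ---- the representative set
  refine ⟨(Finset.range g).image (fun j => 1 + m * (1 - 1) + j), ?_, ?_⟩
  · rw [Finset.card_image_of_injective _ (fun a b hab => by omega), Finset.card_range]
  intro i p h1 h2 hp
  have hperfix : ∀ j, j < m → (⇑C)^[l * r] (1 + m * (1 - 1) + j) = 1 + m * (1 - 1) + j := by
    intro j hj
    rw [hfixiff 1 j (by omega) (by omega) hj]
    exact ⟨⟨l, Nat.mul_comm l r⟩, by rw [Nat.mul_div_cancel _ (by omega : 0 < r)]; exact hl3⟩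
  ---- uniqueness core
  have huniq : ∀ j j', j < g → j' < g →
      C.SameCycle (1 + m * (1 - 1) + j) (1 + m * (1 - 1) + j') → j = j' := by
    intro j j' hj hj' hsame
    obtain ⟨n, hn⟩ := (hsc _ _ (hperfix j (by omega))).1 hsame
    rw [hiter n 1 j (by omega) (by omega) (by omega)] at hn
    obtain ⟨hi, hpeq⟩ := hainj _ _ _ _ (hσpow n 1 (by omega) (by omega)).1 (by omega)
      (Nat.mod_lt _ hm0) (by omega) hn
    obtain ⟨q, rfl⟩ := (hpowr 1 (by omega) (by omega) n).1 hi
    have hsq : s 1 (r * q) = q * T := by rw [Nat.mul_comm]; exact hsmul 1 (by omega) (by omega) q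
    rw [hsq] at hpeq
    -- hpeq : (j + q * T) % m = j'
    obtain ⟨c, hc⟩ := hgT
    have e1 : j' % g = (j + q * T) % g := by
      rw [← hpeq, Nat.mod_mod_of_dvd _ hgm]
    have e2 : (j + q * T) % g = j % g := by
      rw [hc, show j + q * (g * c) = j + g * (q * c) by ring, Nat.add_mul_mod_self_left]
    rw [Nat.mod_eq_of_lt hj', e2, Nat.mod_eq_of_lt hj] at e1
    omega
  ---- reach: every point of block 1 is on the cycle of its residue representative
  have hreach : ∀ w, w < m →
      C.SameCycle (1 + m * (1 - 1) + w % g) (1 + m * (1 - 1) + w) := by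
    intro w hw
    have hx : Nat.gcd m T ∣ g * (w / g) := by rw [hGg]; exact Dvd.dvd.mul_right dvd_rfl _
    obtain ⟨q, hq⟩ := exists_mul_mod m T hm0 (g * (w / g)) hx
    refine ((hsc _ _ (hperfix (w % g) (by have := Nat.mod_lt w hg0; omega))).2 ⟨q * r, ?_⟩)
    rw [hiter (q * r) 1 (w % g) (by omega) (by omega) (by have := Nat.mod_lt w hg0; omega)]
    rw [hsmul 1 (by omega) (by omega) q, (hpowr 1 (by omega) (by omega) (q * r)).2 ⟨q, Nat.mul_comm q r⟩]
    congr 1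
    have e3 : (w % g + q * T) % m = (w % g + g * (w / g)) % m := by
      rw [Nat.add_mod, hq, ← Nat.add_mod]
    rw [e3, Nat.mod_add_div, Nat.mod_eq_of_lt hw]
  ---- assemble existence and uniqueness
  obtain ⟨k, hk⟩ := hσcyc i 1 h1 h2 (by omega) (by omega)
  set p' := (p + s i k) % m with hp'
  have hp'm : p' < m := Nat.mod_lt _ hm0
  have hstep : (⇑C)^[k] (1 + m * (i - 1) + p) = 1 + m * (1 - 1) + p' := by
    rw [hiter k i p h1 h2 hp, hk]
  have hsame1 : C.SameCycle (1 + m * (i - 1) + p) (1 + m * (1 - 1) + p') :=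
    ⟨(k : ℤ), by rw [zpow_natCast, ← Equiv.Perm.iterate_eq_pow]; exact hstep⟩
  have hsame2 : C.SameCycle (1 + m * (1 - 1) + p' % g) (1 + m * (i - 1) + p) :=
    (hreach p' hp'm).trans hsame1.symm
  refine ⟨1 + m * (1 - 1) + p' % g, ⟨Finset.mem_image.2 ⟨p' % g, Finset.mem_range.2 (Nat.mod_lt _ hg0), rfl⟩, hsame2⟩, ?_⟩
  rintro y ⟨hymem, hysame⟩
  obtain ⟨j, hjmem, rfl⟩ := Finset.mem_image.1 hymem
  rw [Finset.mem_range] at hjmem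
  have : C.SameCycle (1 + m * (1 - 1) + j) (1 + m * (1 - 1) + p' % g) :=
    hysame.trans hsame2.symm
  have := huniq j (p' % g) hjmem (Nat.mod_lt _ hg0) this
  rw [this]
end

section
/- Every permutation $C\in S_{mr}$ satisfying $C^{-1}A^m_i C = A^m_{\sigma(i)}$ for all $1\le i\le r$ (where $\sigma\in S_r$) is of the form $C(a^i_j)=a^{\sigma(i)}_{|j+t_{\sigma(i)}|_m}$ for some choice $t_1,\ldots,t_r\in\{0,\ldots,m-1\}$. -/
lemma blk_inj (m : ℕ) (hm : 0 < m) {i k p q : ℕ} (hi : 1 ≤ i) (hk : 1 ≤ k)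
    (hp : p < m) (hq : q < m)
    (h : 1 + m * (i - 1) + p = 1 + m * (k - 1) + q) : i = k ∧ p = q := by
  have h' : m * (i - 1) + p = m * (k - 1) + q := by omega
  have hd : (m * (i - 1) + p) / m = (m * (k - 1) + q) / m := by rw [h']
  rw [Nat.mul_add_div hm, Nat.mul_add_div hm, Nat.div_eq_of_lt hp, Nat.div_eq_of_lt hq] at hd
  have hik : i - 1 = k - 1 := by omega
  have hmm : m * (i - 1) = m * (k - 1) := by rw [hik]
  constructor <;> omega

/-- Every permutation `C` of `{1,…,mr}` (fixing everything outside the blocks)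
satisfying `(A i)^{C⁻¹} = C * A i * C⁻¹ = A (σ i)` for all `1 ≤ i ≤ r`, where `A i`
is the `m`-cycle on the `i`-th block and `σ` is a permutation of `{1,…,r}`, is given by
the formula `C (a i j) = a (σ i) ((j + t (σ i)) % m)` for some choice of residues
`t₁,…,t_r ∈ {0,…,m-1}`, where `a i j = 1+m(i-1)+j`. -/
theorem blockShift_perm_classification (m r : ℕ) (hm : 2 ≤ m) (hr : 2 ≤ r)
    (σ : Equiv.Perm ℕ) (hσ : ∀ i, i < 1 ∨ r < i → σ i = i)
    (A : ℕ → Equiv.Perm ℕ)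
    (hA : ∀ i, 1 ≤ i → i ≤ r →
      (∀ p, p < m → A i (1 + m * (i - 1) + p) = 1 + m * (i - 1) + (p + 1) % m) ∧
      (∀ x, (∀ p, p < m → x ≠ 1 + m * (i - 1) + p) → A i x = x))
    (C : Equiv.Perm ℕ)
    (hCfix : ∀ x, (∀ i p, 1 ≤ i → i ≤ r → p < m → x ≠ 1 + m * (i - 1) + p) → C x = x)
    (hconj : ∀ i, 1 ≤ i → i ≤ r → C * A i * C⁻¹ = A (σ i)) :
    ∃ t : ℕ → ℕ, (∀ i, t i < m) ∧
      ∀ i p, 1 ≤ i → i ≤ r → p < m →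
        C (1 + m * (i - 1) + p) = 1 + m * (σ i - 1) + (p + t (σ i)) % m := by
  classical
  have hm0 : 0 < m := by omega
  have hσrange : ∀ i, 1 ≤ i → i ≤ r → 1 ≤ σ i ∧ σ i ≤ r := by
    intro i h1 h2
    by_contra h
    have hout : σ i < 1 ∨ r < σ i := by omega
    have := hσ (σ i) hout
    have := σ.injective this
    omega
  have key : ∀ i, 1 ≤ i → i ≤ r → ∃ q, q < m ∧ ∀ p, p < m →
      C (1 + m * (i - 1) + p) = 1 + m * (σ i - 1) + (p + q) % m := by
    intro i h1 h2
    obtain ⟨hj1, hj2⟩ := hσrange i h1 h2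
    set j := σ i with hjdef
    have hconj' : C * A i = A j * C := by
      have h := hconj i h1 h2
      rw [← h]
      simp [mul_assoc]
    have hCA : ∀ x, C (A i x) = A j (C x) := by
      intro x
      rw [← Equiv.Perm.mul_apply, hconj', Equiv.Perm.mul_apply]
    have hAi := hA i h1 h2
    have hAj := hA j hj1 hj2
    -- C (a i 0) lands in some block
    have hy : ∃ k q, 1 ≤ k ∧ k ≤ r ∧ q < m ∧
        C (1 + m * (i - 1) + 0) = 1 + m * (k - 1) + q := by
      by_contra h
      push_neg at h
      have hfix : C (C (1 + m * (i - 1) + 0)) = C (1 + m * (i - 1) + 0) := by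
        apply hCfix
        intro k q hk1 hk2 hq
        exact h k q hk1 hk2 hq
      have := C.injective hfix
      exact h i 0 h1 h2 (by omega) this
    obtain ⟨k, q, hk1, hk2, hq, hCk⟩ := hy
    -- show k = j
    have hkj : k = j := by
      by_contra hne
      have h1m : (1 : ℕ) < m := by omega
      have hstep : C (1 + m * (i - 1) + 1) = A j (1 + m * (k - 1) + q) := by
        have := hCA (1 + m * (i - 1) + 0)
        rw [hAi.1 0 hm0, hCk] at this
        simpa [Nat.mod_eq_of_lt h1m] using this
      have hfixj : A j (1 + m * (k - 1) + q) = 1 + m * (k - 1) + q := by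
        apply hAj.2
        intro p' hp' heq
        exact hne (blk_inj m hm0 hk1 hj1 hq hp' heq).1
      rw [hfixj, ← hCk] at hstep
      have := C.injective hstep
      omega
    subst hkj
    refine ⟨q, hq, ?_⟩
    intro p hp
    induction p with
    | zero => simpa [Nat.mod_eq_of_lt hq] using hCk
    | succ p ih =>
      have hpm : p < m := by omega
      have ih' := ih hpm
      have hstep := hCA (1 + m * (i - 1) + p)
      rw [hAi.1 p hpm, Nat.mod_eq_of_lt hp, ih', hAj.1 _ (Nat.mod_lt _ hm0)] at hstep
      rw [hstep, Nat.mod_add_mod]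
      congr 2
      omega
  have key' : ∀ i, ∃ q, q < m ∧ (1 ≤ i → i ≤ r → ∀ p, p < m →
      C (1 + m * (i - 1) + p) = 1 + m * (σ i - 1) + (p + q) % m) := by
    intro i
    by_cases h : 1 ≤ i ∧ i ≤ r
    · obtain ⟨q, hq, hspec⟩ := key i h.1 h.2
      exact ⟨q, hq, fun _ _ => hspec⟩
    · exact ⟨0, hm0, fun h1 h2 => absurd ⟨h1, h2⟩ h⟩
  choose q hq hspec using key'
  refine ⟨fun j => q (σ.symm j), fun j => hq _, ?_⟩
  intro i p h1 h2 hp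
  simp only [Equiv.symm_apply_apply]
  exact hspec i h1 h2 p hp
end

section
/- For every $m\ge 1$ and $k\ge 2$, the map $\psi_m\colon B_k\to S_{mk}$ defined on generators by $\psi_m(\sigma_i) = (a^i_0, a^{i+1}_0, a^i_1, a^{i+1}_1,\ldots,a^i_{m-1},a^{i+1}_{m-1})$ (a $2m$-cycle), where $a^i_j = 1+m(i-1)+j$, is a well-defined group homomorphism. -/
private lemma blk_ne {m t t' q q' : ℕ} (hm : 0 < m) (hq : q < m) (hq' : q' < m)
    (ht : t ≠ t') : 1 + m * t + q ≠ 1 + m * t' + q' := by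
  intro h
  have h' : m * t + q = m * t' + q' := by omega
  have hmod : q = q' := by
    have h2 := congrArg (· % m) h'
    simpa [Nat.mul_add_mod, Nat.mod_eq_of_lt hq, Nat.mod_eq_of_lt hq'] using h2
  exact ht (Nat.eq_of_mul_eq_mul_left hm (by omega))

/-- For `m ≥ 1` and `k ≥ 2`, the map `ψ_m : B_k → S_{mk}` defined on generators by the
`2m`-cycle `ψ_m(σ_i) = (a^i_0, a^{i+1}_0, a^i_1, a^{i+1}_1, …, a^i_{m-1}, a^{i+1}_{m-1})`,
where `a^i_j = 1+m(i-1)+j`, is a well-defined group homomorphism: the images of the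
generators satisfy the braid relations.  Here `s i` is encoded by its defining formula:
`s i (a^i_j) = a^{i+1}_j`, `s i (a^{i+1}_j) = a^i_{(j+1) % m}`, fixing everything else. -/
theorem psi_m_is_hom (m k : ℕ) (hm : 1 ≤ m) (hk : 2 ≤ k)
    (s : ℕ → Equiv.Perm ℕ)
    (hs : ∀ i, 1 ≤ i → i ≤ k - 1 →
      (∀ q, q < m →
        s i (1 + m * (i - 1) + q) = 1 + m * i + q ∧
        s i (1 + m * i + q) = 1 + m * (i - 1) + (q + 1) % m) ∧
      (∀ x, (∀ q, q < m → x ≠ 1 + m * (i - 1) + q ∧ x ≠ 1 + m * i + q) → s i x = x)) :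
    (∀ i, 1 ≤ i → i + 1 ≤ k - 1 →
      s i * s (i + 1) * s i = s (i + 1) * s i * s (i + 1)) ∧
    (∀ i j, 1 ≤ i → j ≤ k - 1 → i + 2 ≤ j → s i * s j = s j * s i) := by
  have hm0 : 0 < m := hm
  constructor
  · intro i hi1 hi2
    obtain ⟨a, rfl⟩ : ∃ a, i = a + 1 := ⟨i - 1, by omega⟩
    show s (a+1) * s (a+2) * s (a+1) = s (a+2) * s (a+1) * s (a+2)
    obtain ⟨H1, H2⟩ := hs (a+1) (by omega) (by omega)
    obtain ⟨G1, G2⟩ := hs (a+2) (by omega) (by omega)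
    have EA : ∀ q, q < m → s (a+1) (1+m*a+q) = 1+m*(a+1)+q := fun q hq => (H1 q hq).1
    have EB : ∀ q, q < m → s (a+1) (1+m*(a+1)+q) = 1+m*a+(q+1)%m := fun q hq => (H1 q hq).2
    have EO : ∀ t q, q < m → t ≠ a → t ≠ a+1 → s (a+1) (1+m*t+q) = 1+m*t+q :=
      fun t q hq h1 h2 => H2 _ (fun q' hq' => ⟨blk_ne hm0 hq hq' h1, blk_ne hm0 hq hq' h2⟩)
    have FA : ∀ q, q < m → s (a+2) (1+m*(a+1)+q) = 1+m*(a+2)+q := fun q hq => (G1 q hq).1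
    have FB : ∀ q, q < m → s (a+2) (1+m*(a+2)+q) = 1+m*(a+1)+(q+1)%m := fun q hq => (G1 q hq).2
    have FO : ∀ t q, q < m → t ≠ a+1 → t ≠ a+2 → s (a+2) (1+m*t+q) = 1+m*t+q :=
      fun t q hq h1 h2 => G2 _ (fun q' hq' => ⟨blk_ne hm0 hq hq' h1, blk_ne hm0 hq hq' h2⟩)
    have E0 : s (a+1) 0 = 0 := H2 0 (fun q hq => ⟨by omega, by omega⟩)
    have F0 : s (a+2) 0 = 0 := G2 0 (fun q hq => ⟨by omega, by omega⟩)
    ext x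
    simp only [Equiv.Perm.mul_apply]
    rcases Nat.eq_zero_or_pos x with rfl | hx
    · simp only [E0, F0]
    · obtain ⟨t, q, hq, rfl⟩ : ∃ t q, q < m ∧ x = 1 + m * t + q :=
        ⟨(x-1)/m, (x-1)%m, Nat.mod_lt _ hm0, by
          have hd := Nat.div_add_mod (x-1) m; omega⟩
      have hq1 : (q+1) % m < m := Nat.mod_lt _ hm0
      have hq2 : ((q+1)%m+1) % m < m := Nat.mod_lt _ hm0
      rcases eq_or_ne t a with hE | h1
      · rw [hE]
        simp only [EA _ hq, FA _ hq, EO (a+2) _ hq (by omega) (by omega),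
          FO a _ hq (by omega) (by omega)]
      rcases eq_or_ne t (a+1) with hE | h2
      · rw [hE]
        simp only [EB _ hq, FA _ hq, FO a _ hq1 (by omega) (by omega),
          EA _ hq1, EO (a+2) _ hq (by omega) (by omega), FB _ hq]
      rcases eq_or_ne t (a+2) with hE | h3
      · rw [hE]
        simp only [EO (a+2) _ hq (by omega) (by omega), FB _ hq, EB _ hq1,
          FO a _ hq2 (by omega) (by omega)]
      · simp only [EO t _ hq h1 h2, FO t _ hq h2 h3]
  · intro i j hi hjk hij
    obtain ⟨a, rfl⟩ : ∃ a, i = a + 1 := ⟨i - 1, by omega⟩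
    obtain ⟨b, rfl⟩ : ∃ b, j = b + 1 := ⟨j - 1, by omega⟩
    obtain ⟨H1, H2⟩ := hs (a+1) (by omega) (by omega)
    obtain ⟨G1, G2⟩ := hs (b+1) (by omega) (by omega)
    have EA : ∀ q, q < m → s (a+1) (1+m*a+q) = 1+m*(a+1)+q := fun q hq => (H1 q hq).1
    have EB : ∀ q, q < m → s (a+1) (1+m*(a+1)+q) = 1+m*a+(q+1)%m := fun q hq => (H1 q hq).2
    have EO : ∀ t q, q < m → t ≠ a → t ≠ a+1 → s (a+1) (1+m*t+q) = 1+m*t+q :=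
      fun t q hq h1 h2 => H2 _ (fun q' hq' => ⟨blk_ne hm0 hq hq' h1, blk_ne hm0 hq hq' h2⟩)
    have FA : ∀ q, q < m → s (b+1) (1+m*b+q) = 1+m*(b+1)+q := fun q hq => (G1 q hq).1
    have FB : ∀ q, q < m → s (b+1) (1+m*(b+1)+q) = 1+m*b+(q+1)%m := fun q hq => (G1 q hq).2
    have FO : ∀ t q, q < m → t ≠ b → t ≠ b+1 → s (b+1) (1+m*t+q) = 1+m*t+q :=
      fun t q hq h1 h2 => G2 _ (fun q' hq' => ⟨blk_ne hm0 hq hq' h1, blk_ne hm0 hq hq' h2⟩)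
    have E0 : s (a+1) 0 = 0 := H2 0 (fun q hq => ⟨by omega, by omega⟩)
    have F0 : s (b+1) 0 = 0 := G2 0 (fun q hq => ⟨by omega, by omega⟩)
    ext x
    simp only [Equiv.Perm.mul_apply]
    rcases Nat.eq_zero_or_pos x with rfl | hx
    · simp only [E0, F0]
    · obtain ⟨t, q, hq, rfl⟩ : ∃ t q, q < m ∧ x = 1 + m * t + q :=
        ⟨(x-1)/m, (x-1)%m, Nat.mod_lt _ hm0, by
          have hd := Nat.div_add_mod (x-1) m; omega⟩
      have hq1 : (q+1) % m < m := Nat.mod_lt _ hm0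
      rcases eq_or_ne t a with hE | h1
      · rw [hE]
        simp only [EA _ hq, FO a _ hq (by omega) (by omega),
          FO (a+1) _ hq (by omega) (by omega)]
      rcases eq_or_ne t (a+1) with hE | h2
      · rw [hE]
        simp only [EB _ hq, FO (a+1) _ hq (by omega) (by omega),
          FO a _ hq1 (by omega) (by omega)]
      rcases eq_or_ne t b with hE | h3
      · rw [hE]
        simp only [FA _ hq, EO b _ hq (by omega) (by omega),
          EO (b+1) _ hq (by omega) (by omega)]
      rcases eq_or_ne t (b+1) with hE | h4
      · rw [hE]
        simp only [FB _ hq, EO (b+1) _ hq (by omega) (by omega),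
          EO b _ hq1 (by omega) (by omega)]
      · simp only [EO t _ hq h1 h2, FO t _ hq h3 h4]
end

section
/- For every $m\ge 1$ and $k\ge 3$, the homomorphism $\psi_m\colon B_k\to S_{mk}$ with $\psi_m(\sigma_i)=(a^i_0,a^{i+1}_0,a^i_1,a^{i+1}_1,\ldots,a^i_{m-1},a^{i+1}_{m-1})$ is non-cyclic and its image acts transitively on $\{1,\ldots,mk\}$. -/
/-!
Both generators `s 1` and `s 2` exist since `k ≥ 3`, and they do not commute: `s 2 * s 1`
sends `1 + m` to `1 + 1 % m` whereas `s 1 * s 2` sends it to `1 + 2m`. A cyclic group is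
commutative, so the image is not cyclic. For transitivity, `s 1 ^ 2` moves `1 + q` to
`1 + (q + 1)` inside the first block, and `s (i + 1)` moves `1 + m i + q` to `1 + m (i + 1) + q`,
so every point of `{1, …, mk}` lies in the orbit of `1`.
-/

open Equiv

lemma Subgroup.exists_mem_apply_eq_of_exists_apply_base {α : Type*}
    {H : Subgroup (Perm α)} {b x y : α} (hx : ∃ g ∈ H, g b = x) (hy : ∃ g ∈ H, g b = y) :
    ∃ g ∈ H, g x = y := by
  obtain ⟨g, hg, rfl⟩ := hx
  obtain ⟨h, hh, rfl⟩ := hy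
  exact ⟨h * g⁻¹, mul_mem hh (inv_mem hg), by simp⟩

/-- The images of the braid generators `σ_i`, `1 ≤ i ≤ k - 1`, under `ψ_m`, where
`1 + m * i + q` is the point `a^{i+1}_q`. -/
def IsPsiGenerators (m k : ℕ) (s : ℕ → Perm ℕ) : Prop :=
  ∀ i, 1 ≤ i → i ≤ k - 1 →
    (∀ q, q < m →
      s i (1 + m * (i - 1) + q) = 1 + m * i + q ∧
      s i (1 + m * i + q) = 1 + m * (i - 1) + (q + 1) % m) ∧
    (∀ x, (∀ q, q < m → x ≠ 1 + m * (i - 1) + q ∧ x ≠ 1 + m * i + q) → s i x = x)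

def psiImage (k : ℕ) (s : ℕ → Perm ℕ) : Subgroup (Perm ℕ) :=
  Subgroup.closure {g : Perm ℕ | ∃ i, 1 ≤ i ∧ i ≤ k - 1 ∧ g = s i}

namespace IsPsiGenerators

variable {m k : ℕ} {s : ℕ → Perm ℕ}

lemma mem_psiImage {i : ℕ} (hi : 1 ≤ i) (hik : i ≤ k - 1) : s i ∈ psiImage k s :=
  Subgroup.subset_closure ⟨i, hi, hik, rfl⟩

variable (hs : IsPsiGenerators m k s)
include hs

lemma apply_succ_block {i q : ℕ} (hik : i + 1 < k) (hq : q < m) :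
    s (i + 1) (1 + m * i + q) = 1 + m * (i + 1) + q := by
  simpa using ((hs (i + 1) (by omega) (by omega)).1 q hq).1

lemma one_apply_one_add_mul (hk : 2 ≤ k) {q : ℕ} (hq : q < m) :
    s 1 (1 + m + q) = 1 + (q + 1) % m := by
  simpa using ((hs 1 le_rfl (by omega)).1 q hq).2

lemma sq_one_apply (hk : 2 ≤ k) {q : ℕ} (hq : q + 1 < m) : (s 1 ^ 2) (1 + q) = 1 + (q + 1) := by
  have h := apply_succ_block hs (i := 0) (by omega) (by omega : q < m)
  simp only [mul_zero, add_zero, zero_add, mul_one] at h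
  rw [sq, Perm.mul_apply, h, one_apply_one_add_mul hs hk (by omega), Nat.mod_eq_of_lt hq]

lemma mul_ne_mul (hm : 1 ≤ m) (hk : 3 ≤ k) : s 1 * s 2 ≠ s 2 * s 1 := by
  have h1m : 1 % m < m := Nat.mod_lt _ (by omega)
  have e1 : s 2 (1 + m) = 1 + 2 * m := by
    simpa [mul_comm m 2] using apply_succ_block hs (i := 1) (q := 0) (by omega) (by omega)
  have e2 : s 1 (1 + 2 * m) = 1 + 2 * m :=
    (hs 1 le_rfl (by omega)).2 _ fun q hq ↦ by omega
  have e3 : s 1 (1 + m) = 1 + 1 % m := by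
    simpa using one_apply_one_add_mul hs (by omega) (q := 0) (by omega)
  have e4 : s 2 (1 + 1 % m) = 1 + 1 % m :=
    (hs 2 (by omega) (by omega)).2 _ fun q hq ↦ by omega
  intro hcomm
  have := DFunLike.congr_fun hcomm (1 + m)
  rw [Perm.mul_apply, Perm.mul_apply, e1, e2, e3, e4] at this
  omega

lemma exists_apply_one_eq_first_block (hk : 2 ≤ k) {q : ℕ} (hq : q < m) :
    ∃ g ∈ psiImage k s, g 1 = 1 + q := by
  induction q with
  | zero => exact ⟨1, one_mem _, rfl⟩
  | succ q ih =>
    obtain ⟨g, hg, hg1⟩ := ih (by omega)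
    refine ⟨s 1 ^ 2 * g, mul_mem (pow_mem (mem_psiImage le_rfl (by omega)) 2) hg, ?_⟩
    rw [Perm.mul_apply, hg1, sq_one_apply hs hk hq]

lemma exists_apply_one_eq (hk : 2 ≤ k) {i q : ℕ} (hi : i < k) (hq : q < m) :
    ∃ g ∈ psiImage k s, g 1 = 1 + m * i + q := by
  induction i with
  | zero => simpa using exists_apply_one_eq_first_block hs hk hq
  | succ i ih =>
    obtain ⟨g, hg, hg1⟩ := ih (by omega)
    refine ⟨s (i + 1) * g, mul_mem (mem_psiImage (by omega) (by omega)) hg, ?_⟩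
    rw [Perm.mul_apply, hg1, apply_succ_block hs hi hq]

lemma exists_apply_one_eq_of_mem_Icc (hm : 1 ≤ m) (hk : 2 ≤ k) {x : ℕ} (hx : 1 ≤ x)
    (hxk : x ≤ m * k) : ∃ g ∈ psiImage k s, g 1 = x := by
  have hdiv : (x - 1) / m < k := by
    rw [Nat.div_lt_iff_lt_mul (by omega), Nat.mul_comm k m]
    omega
  obtain ⟨g, hg, hg1⟩ := exists_apply_one_eq hs hk hdiv (Nat.mod_lt (x - 1) (by omega))
  refine ⟨g, hg, ?_⟩
  have := Nat.div_add_mod (x - 1) m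
  omega

end IsPsiGenerators

/-- For `m ≥ 1` and `k ≥ 3`, the homomorphism `ψ_m : B_k → S_{mk}` with
`ψ_m(σ_i) = (a^i_0, a^{i+1}_0, …, a^i_{m-1}, a^{i+1}_{m-1})` (encoded by the defining
formula of the images `s i` of the generators) is non-cyclic and its image acts
transitively on `{1,…,mk}`. -/
theorem psi_m_noncyclic_transitive (m k : ℕ) (hm : 1 ≤ m) (hk : 3 ≤ k)
    (s : ℕ → Equiv.Perm ℕ)
    (hs : ∀ i, 1 ≤ i → i ≤ k - 1 →
      (∀ q, q < m →
        s i (1 + m * (i - 1) + q) = 1 + m * i + q ∧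
        s i (1 + m * i + q) = 1 + m * (i - 1) + (q + 1) % m) ∧
      (∀ x, (∀ q, q < m → x ≠ 1 + m * (i - 1) + q ∧ x ≠ 1 + m * i + q) → s i x = x)) :
    ¬ IsCyclic ↥(Subgroup.closure {g : Equiv.Perm ℕ | ∃ i, 1 ≤ i ∧ i ≤ k - 1 ∧ g = s i}) ∧
    (∀ x y, 1 ≤ x → x ≤ m * k → 1 ≤ y → y ≤ m * k →
      ∃ g ∈ Subgroup.closure {g : Equiv.Perm ℕ | ∃ i, 1 ≤ i ∧ i ≤ k - 1 ∧ g = s i},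
        g x = y) := by
  have hs : IsPsiGenerators m k s := hs
  change ¬ IsCyclic (psiImage k s) ∧
    ∀ x y, 1 ≤ x → x ≤ m * k → 1 ≤ y → y ≤ m * k → ∃ g ∈ psiImage k s, g x = y
  refine ⟨fun _ ↦ hs.mul_ne_mul hm hk ?_, fun x y hx hxk hy hyk ↦ ?_⟩
  · exact setLike_mul_comm (s := psiImage k s)
      (IsPsiGenerators.mem_psiImage le_rfl (by omega))
      (IsPsiGenerators.mem_psiImage (by omega) (by omega))
  · exact Subgroup.exists_mem_apply_eq_of_exists_apply_base
      (hs.exists_apply_one_eq_of_mem_Icc hm (by omega) hx hxk)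
      (hs.exists_apply_one_eq_of_mem_Icc hm (by omega) hy hyk)
end

section
/- Let $m\ge 2$, $\sigma,\tau\in S_r$ on $\{j,\ldots,j+r-1\}$, with data $t^1_\ast, t^2_\ast\in\{0,\ldots,m-1\}$. Then the conjugate $(C^{\tau,m}_{t^2})^{-1}\, C^{\sigma,m}_{t^1}\, C^{\tau,m}_{t^2}$ equals $C^{\tau^{-1}\sigma\tau,m}_{t^3}$ where $t^3_i = |t^2_{\sigma^{-1}(\tau(i))} + t^1_{\tau(i)} - t^2_{\tau(i)}|_m$. -/
/-!
Composing two block shifts composes the permutations of the block indices and adds the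
shifts modulo `m`. So `C1 * C2` and `C2 * C3` both send `a^i_p` to the block of `σ (τ i)`,
shifted by `t2 (τ i) + t1 (σ (τ i))`: for `C2 * C3` this is because `t3` is chosen so that
`t3 + t2 (σ (τ i)) ≡ t2 (τ i) + t1 (σ (τ i)) (mod m)`. Off the blocks all three maps are the
identity, hence `C1 * C2 = C2 * C3`.
-/

theorem Equiv.Perm.mapsTo_of_forall_notMem_apply_eq {α : Type*} {π : Equiv.Perm α}
    {s : Set α} (h : ∀ x ∉ s, π x = x) : Set.MapsTo π s s := fun x hx => by
  by_contra hπx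
  exact hπx (by rwa [π.injective (h _ hπx)])

theorem Nat.add_mod_add_sub_add_mod {m w : ℕ} (p x y : ℕ) (hw : w ≤ m) :
    (p + (x + y + (m - w)) % m + w) % m = (p + x + y) % m := by
  rw [Nat.add_right_comm, Nat.add_mod_mod, show p + w + (x + y + (m - w)) = p + x + y + m by omega,
    Nat.add_mod_right]

/-- `C` is the paper's `C^{σ,m}_t` with block indices in `I`,
where `a^i_p = 1 + m * (i - 1) + p`. -/
structure IsBlockShift (m : ℕ) (I : Set ℕ) (σ : Equiv.Perm ℕ) (t : ℕ → ℕ)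
    (C : Equiv.Perm ℕ) : Prop where
  apply_block : ∀ i p, i ∈ I → p < m →
    C (1 + m * (i - 1) + p) = 1 + m * (σ i - 1) + (p + t (σ i)) % m
  apply_of_forall_ne_block : ∀ x, (∀ i p, i ∈ I → p < m → x ≠ 1 + m * (i - 1) + p) → C x = x

theorem isBlockShift_Icc {m j r : ℕ} {σ : Equiv.Perm ℕ} {t : ℕ → ℕ} {C : Equiv.Perm ℕ}
    (hC : ∀ i p, j ≤ i → i ≤ j + r - 1 → p < m →
      C (1 + m * (i - 1) + p) = 1 + m * (σ i - 1) + (p + t (σ i)) % m)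
    (hCfix : ∀ x, (∀ i p, j ≤ i → i ≤ j + r - 1 → p < m → x ≠ 1 + m * (i - 1) + p) →
      C x = x) :
    IsBlockShift m (Set.Icc j (j + r - 1)) σ t C where
  apply_block i p hi := hC i p hi.1 hi.2
  apply_of_forall_ne_block x hx := hCfix x fun i p hi₁ hi₂ => hx i p ⟨hi₁, hi₂⟩

namespace IsBlockShift

variable {m : ℕ} {I : Set ℕ} {σ τ : Equiv.Perm ℕ} {t u : ℕ → ℕ} {C D : Equiv.Perm ℕ}

theorem mul_apply_block (hC : IsBlockShift m I σ t C) (hD : IsBlockShift m I τ u D)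
    (hτ : Set.MapsTo τ I I) {i p : ℕ} (hi : i ∈ I) (hp : p < m) :
    (C * D) (1 + m * (i - 1) + p) =
      1 + m * (σ (τ i) - 1) + (p + u (τ i) + t (σ (τ i))) % m := by
  rw [Equiv.Perm.mul_apply, hD.apply_block i p hi hp,
    hC.apply_block _ _ (hτ hi) (Nat.mod_lt _ (by omega)), Nat.mod_add_mod]

theorem mul_apply_of_forall_ne_block (hC : IsBlockShift m I σ t C)
    (hD : IsBlockShift m I τ u D) {x : ℕ}
    (hx : ∀ i p, i ∈ I → p < m → x ≠ 1 + m * (i - 1) + p) : (C * D) x = x := by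
  rw [Equiv.Perm.mul_apply, hD.apply_of_forall_ne_block x hx, hC.apply_of_forall_ne_block x hx]

end IsBlockShift

theorem blockShift_conj_general (m r j : ℕ)
    (σ τ : Equiv.Perm ℕ)
    (hσ : ∀ x, x < j ∨ j + r - 1 < x → σ x = x)
    (hτ : ∀ x, x < j ∨ j + r - 1 < x → τ x = x)
    (t1 t2 t3 : ℕ → ℕ) (ht2 : ∀ i, t2 i < m)
    (ht3 : ∀ i, j ≤ i → i ≤ j + r - 1 →
      t3 i = (t2 (σ⁻¹ (τ i)) + t1 (τ i) + (m - t2 (τ i))) % m)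
    (C1 C2 C3 : Equiv.Perm ℕ)
    (hC1 : ∀ i p, j ≤ i → i ≤ j + r - 1 → p < m →
      C1 (1 + m * (i - 1) + p) = 1 + m * (σ i - 1) + (p + t1 (σ i)) % m)
    (hC1fix : ∀ x, (∀ i p, j ≤ i → i ≤ j + r - 1 → p < m → x ≠ 1 + m * (i - 1) + p) →
      C1 x = x)
    (hC2 : ∀ i p, j ≤ i → i ≤ j + r - 1 → p < m →
      C2 (1 + m * (i - 1) + p) = 1 + m * (τ i - 1) + (p + t2 (τ i)) % m)
    (hC2fix : ∀ x, (∀ i p, j ≤ i → i ≤ j + r - 1 → p < m → x ≠ 1 + m * (i - 1) + p) →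
      C2 x = x)
    (hC3 : ∀ i p, j ≤ i → i ≤ j + r - 1 → p < m →
      C3 (1 + m * (i - 1) + p) =
        1 + m * ((τ⁻¹ * σ * τ) i - 1) + (p + t3 ((τ⁻¹ * σ * τ) i)) % m)
    (hC3fix : ∀ x, (∀ i p, j ≤ i → i ≤ j + r - 1 → p < m → x ≠ 1 + m * (i - 1) + p) →
      C3 x = x) :
    C2⁻¹ * C1 * C2 = C3 := by
  set I := Set.Icc j (j + r - 1)
  have hσI : ∀ x ∉ I, σ x = x := fun x hx => hσ x (by simp only [I, Set.mem_Icc] at hx; omega)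
  have hτI : ∀ x ∉ I, τ x = x := fun x hx => hτ x (by simp only [I, Set.mem_Icc] at hx; omega)
  have hconjI : ∀ x ∉ I, (τ⁻¹ * σ * τ) x = x := fun x hx => by
    rw [Equiv.Perm.mul_apply, Equiv.Perm.mul_apply, hτI x hx, hσI x hx, Equiv.Perm.inv_eq_iff_eq,
      hτI x hx]
  have h1 := isBlockShift_Icc hC1 hC1fix
  have h2 := isBlockShift_Icc hC2 hC2fix
  have h3 := isBlockShift_Icc hC3 hC3fix
  suffices C1 * C2 = C2 * C3 by rw [mul_assoc, this, inv_mul_cancel_left]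
  ext x
  by_cases hx : ∃ i p, i ∈ I ∧ p < m ∧ x = 1 + m * (i - 1) + p
  · obtain ⟨i, p, hi, hp, rfl⟩ := hx
    have hk : τ ((τ⁻¹ * σ * τ) i) = σ (τ i) := by simp
    have hσk : σ⁻¹ (σ (τ i)) = τ i := σ.symm_apply_apply _
    have hkI : (τ⁻¹ * σ * τ) i ∈ I := Equiv.Perm.mapsTo_of_forall_notMem_apply_eq hconjI hi
    rw [h1.mul_apply_block h2 (Equiv.Perm.mapsTo_of_forall_notMem_apply_eq hτI) hi hp,
      h2.mul_apply_block h3 (Equiv.Perm.mapsTo_of_forall_notMem_apply_eq hconjI) hi hp, hk,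
      ht3 _ hkI.1 hkI.2, hk, hσk,
      Nat.add_mod_add_sub_add_mod _ _ _ (ht2 _).le]
  · push Not at hx
    rw [h1.mul_apply_of_forall_ne_block h2 hx, h2.mul_apply_of_forall_ne_block h3 hx]

/-- Conjugation of block-shift permutations: for `m ≥ 2`, permutations `σ, τ` of
`{j,…,j+r-1}` and shift data `t¹, t² ∈ {0,…,m-1}`, one has
`(C^{τ,m}_{t²})⁻¹ * C^{σ,m}_{t¹} * C^{τ,m}_{t²} = C^{τ⁻¹στ,m}_{t³}` where
`t³ i = (t² (σ⁻¹ (τ i)) + t¹ (τ i) - t² (τ i)) % m`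
(the subtraction is taken mod `m`, i.e. as `+ (m - t² (τ i))`).
Each `C^{σ,m}_t` is encoded by its defining formula
`C (a i p) = a (σ i) ((p + t (σ i)) % m)` on the blocks `a i p = 1+m(i-1)+p`,
fixing everything else. -/
theorem blockShift_conj (m r j : ℕ) (hm : 2 ≤ m) (hr : 1 ≤ r) (hj : 1 ≤ j)
    (σ τ : Equiv.Perm ℕ)
    (hσ : ∀ x, x < j ∨ j + r - 1 < x → σ x = x)
    (hτ : ∀ x, x < j ∨ j + r - 1 < x → τ x = x)
    (t1 t2 t3 : ℕ → ℕ) (ht1 : ∀ i, t1 i < m) (ht2 : ∀ i, t2 i < m)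
    (ht3 : ∀ i, j ≤ i → i ≤ j + r - 1 →
      t3 i = (t2 (σ⁻¹ (τ i)) + t1 (τ i) + (m - t2 (τ i))) % m)
    (C1 C2 C3 : Equiv.Perm ℕ)
    (hC1 : ∀ i p, j ≤ i → i ≤ j + r - 1 → p < m →
      C1 (1 + m * (i - 1) + p) = 1 + m * (σ i - 1) + (p + t1 (σ i)) % m)
    (hC1fix : ∀ x, (∀ i p, j ≤ i → i ≤ j + r - 1 → p < m → x ≠ 1 + m * (i - 1) + p) →
      C1 x = x)
    (hC2 : ∀ i p, j ≤ i → i ≤ j + r - 1 → p < m →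
      C2 (1 + m * (i - 1) + p) = 1 + m * (τ i - 1) + (p + t2 (τ i)) % m)
    (hC2fix : ∀ x, (∀ i p, j ≤ i → i ≤ j + r - 1 → p < m → x ≠ 1 + m * (i - 1) + p) →
      C2 x = x)
    (hC3 : ∀ i p, j ≤ i → i ≤ j + r - 1 → p < m →
      C3 (1 + m * (i - 1) + p) =
        1 + m * ((τ⁻¹ * σ * τ) i - 1) + (p + t3 ((τ⁻¹ * σ * τ) i)) % m)
    (hC3fix : ∀ x, (∀ i p, j ≤ i → i ≤ j + r - 1 → p < m → x ≠ 1 + m * (i - 1) + p) →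
      C3 x = x) :
    C2⁻¹ * C1 * C2 = C3 :=
  blockShift_conj_general m r j σ τ hσ hτ t1 t2 t3 ht2 ht3 C1 C2 C3 hC1 hC1fix hC2 hC2fix hC3 hC3fix
end

section
/- Let $\omega\colon B_k\to S_n$ be a homomorphism, write $\widehat\sigma_i=\omega(\sigma_i)$, and let $x\in\mathrm{supp}(\widehat\sigma_i)$ for some $2\le i\le k-2$. If $x\notin\mathrm{supp}(\widehat\sigma_{i+1})$ then $\widehat\sigma_i(x)\in\mathrm{supp}(\widehat\sigma_{i+1})$; likewise if $x\notin\mathrm{supp}(\widehat\sigma_{i-1})$ then $\widehat\sigma_i(x)\in\mathrm{supp}(\widehat\sigma_{i-1})$. -/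
lemma braid_supp_aux {n : ℕ} (a b : Equiv.Perm (Fin n))
    (hab : a * b * a = b * a * b) (x : Fin n)
    (hx : x ∈ a.support) (hx' : x ∉ b.support) : a x ∈ b.support := by
  by_contra h
  rw [Equiv.Perm.notMem_support] at hx' h
  have hx2 : a x ≠ x := Equiv.Perm.mem_support.mp hx
  have := congrArg (fun p => p x) hab
  simp only [Equiv.Perm.mul_apply, hx', h] at this
  exact hx2 (a.injective this)

/-- Let `ω : B_k → S_n` be a homomorphism (encoded by the images `s i` of the
generators satisfying the braid relations) and `x ∈ supp(σ̂ᵢ)` for some `2 ≤ i ≤ k-2`.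
If `x ∉ supp(σ̂ᵢ₊₁)` then `σ̂ᵢ(x) ∈ supp(σ̂ᵢ₊₁)`; likewise if `x ∉ supp(σ̂ᵢ₋₁)` then
`σ̂ᵢ(x) ∈ supp(σ̂ᵢ₋₁)`. -/
theorem supp_neighbor (k n : ℕ)
    (s : ℕ → Equiv.Perm (Fin n))
    (hbraid : ∀ i, 1 ≤ i → i + 1 ≤ k - 1 →
      s i * s (i + 1) * s i = s (i + 1) * s i * s (i + 1))
    (hcomm : ∀ i j, 1 ≤ i → j ≤ k - 1 → i + 2 ≤ j → s i * s j = s j * s i)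
    (i : ℕ) (h1 : 2 ≤ i) (h2 : i ≤ k - 2)
    (x : Fin n) (hx : x ∈ (s i).support) :
    (x ∉ (s (i + 1)).support → s i x ∈ (s (i + 1)).support) ∧
    (x ∉ (s (i - 1)).support → s i x ∈ (s (i - 1)).support) := by
  have hk : 4 ≤ k := by omega
  constructor
  · intro hx'
    exact braid_supp_aux (s i) (s (i + 1)) (hbraid i (by omega) (by omega)) x hx hx'
  · intro hx'
    have hb := hbraid (i - 1) (by omega) (by omega)
    rw [Nat.sub_add_cancel (by omega)] at hb
    exact braid_supp_aux (s i) (s (i - 1))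
      hb.symm x hx hx'
end

section
/- Let $\omega\colon B_k\to S_n$ be a homomorphism with $\widehat\sigma_i=\omega(\sigma_i)$. For every $2\le i\le k-2$ and every cycle $D$ in the cycle decomposition of $\widehat\sigma_i$, one has $|\mathrm{supp}(D)\cap\mathrm{supp}(\widehat\sigma_{i+1})| \ge \tfrac12|\mathrm{supp}(D)|$; consequently $|\mathrm{supp}(\widehat\sigma_i)\cap\mathrm{supp}(\widehat\sigma_{i+1})| \ge \tfrac12|\mathrm{supp}(\widehat\sigma_i)|$. -/
/-!
By the braid relation, `σ̂ᵢ` sends every point of `supp σ̂ᵢ \ supp σ̂ᵢ₊₁` into `supp σ̂ᵢ₊₁`.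
Hence on any `σ̂ᵢ`-invariant subset `T` of `supp σ̂ᵢ` (the support of a cycle of `σ̂ᵢ`, or all
of `supp σ̂ᵢ`), `σ̂ᵢ` injects the part of `T` outside `supp σ̂ᵢ₊₁` into the part inside it.
-/

open Finset

lemma Finset.card_le_two_mul_card_inter_of_mapsTo {α : Type*} [DecidableEq α] {T S : Finset α}
    (f : α → α) (hf : Set.MapsTo f ↑(T \ S) ↑(T ∩ S)) (hinj : Set.InjOn f ↑(T \ S)) :
    #T ≤ 2 * #(T ∩ S) := by
  have hsplit : #(T ∩ S) + #(T \ S) = #T := card_inter_add_card_sdiff T S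
  have hle : #(T \ S) ≤ #(T ∩ S) := card_le_card_of_injOn f hf hinj
  omega

namespace Equiv.Perm

variable {α : Type*} [DecidableEq α] [Fintype α] {a b : Perm α}

lemma apply_mem_support_of_braid (hab : a * b * a = b * a * b) {x : α} (hxa : x ∈ a.support)
    (hxb : x ∉ b.support) : a x ∈ b.support := by
  rw [notMem_support] at hxb
  by_contra hbax
  rw [notMem_support] at hbax
  have haax : a (a x) = a x := by
    simpa only [mul_apply, hxb, hbax] using congrArg (· x) hab
  exact mem_support.mp hxa (a.injective haax)

lemma card_le_two_mul_card_inter_support_of_braid (hab : a * b * a = b * a * b)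
    {T : Finset α} (hT : T ⊆ a.support) (haT : ∀ x ∈ T, a x ∈ T) :
    #T ≤ 2 * #(T ∩ b.support) := by
  refine card_le_two_mul_card_inter_of_mapsTo a (fun x hx => ?_) a.injective.injOn
  obtain ⟨hxT, hxb⟩ := mem_sdiff.mp hx
  exact mem_inter.mpr ⟨haT x hxT, apply_mem_support_of_braid hab (hT hxT) hxb⟩

end Equiv.Perm

open Equiv.Perm in
theorem cycle_supp_half_general (k n : ℕ)
    (s : ℕ → Equiv.Perm (Fin n))
    (hbraid : ∀ i, 1 ≤ i → i + 1 ≤ k - 1 →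
      s i * s (i + 1) * s i = s (i + 1) * s i * s (i + 1))
    (i : ℕ) (h1 : 2 ≤ i) (h2 : i ≤ k - 2) :
    (∀ D ∈ (s i).cycleFactorsFinset,
      D.support.card ≤ 2 * (D.support ∩ (s (i + 1)).support).card) ∧
    (s i).support.card ≤ 2 * ((s i).support ∩ (s (i + 1)).support).card := by
  have hab := hbraid i (by omega) (by omega)
  refine ⟨fun D hD => ?_, ?_⟩
  · exact card_le_two_mul_card_inter_support_of_braid hab
      (mem_cycleFactorsFinset_support_le hD) (fun x => (mem_cycleFactorsFinset_support hD x).mpr)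
  · exact card_le_two_mul_card_inter_support_of_braid hab subset_rfl
      (fun x => apply_mem_support.mpr)

/-- Let `ω : B_k → S_n` be a homomorphism (encoded by the images `s i` of the
generators satisfying the braid relations). For every `2 ≤ i ≤ k-2` and every cycle `D`
in the cycle decomposition of `σ̂ᵢ`, one has
`|supp(D) ∩ supp(σ̂ᵢ₊₁)| ≥ ½ |supp(D)|`; consequently
`|supp(σ̂ᵢ) ∩ supp(σ̂ᵢ₊₁)| ≥ ½ |supp(σ̂ᵢ)|`. -/
theorem cycle_supp_half (k n : ℕ)
    (s : ℕ → Equiv.Perm (Fin n))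
    (hbraid : ∀ i, 1 ≤ i → i + 1 ≤ k - 1 →
      s i * s (i + 1) * s i = s (i + 1) * s i * s (i + 1))
    (hcomm : ∀ i j, 1 ≤ i → j ≤ k - 1 → i + 2 ≤ j → s i * s j = s j * s i)
    (i : ℕ) (h1 : 2 ≤ i) (h2 : i ≤ k - 2) :
    (∀ D ∈ (s i).cycleFactorsFinset,
      D.support.card ≤ 2 * (D.support ∩ (s (i + 1)).support).card) ∧
    (s i).support.card ≤ 2 * ((s i).support ∩ (s (i + 1)).support).card :=
  cycle_supp_half_general k n s hbraid i h1 h2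
end

section
/- Let $k\ge 4$, $m\ge 1$, and let $\omega\colon B_k\to S_{mk}$ be a transitive homomorphism such that $\mathrm{supp}(\widehat\sigma_i)\cap\mathrm{supp}(\widehat\sigma_j)=\emptyset$ whenever $|i-j|>1$. Then $|\mathrm{supp}(\widehat\sigma_1)| = 2m$ and $|\mathrm{supp}(\widehat\sigma_1)\cap\mathrm{supp}(\widehat\sigma_2)| = m$. -/
/-!
All `σ̂ᵢ` are conjugate, and a single conjugator carries `(σ̂ᵢ, σ̂ᵢ₊₁)` to `(σ̂ᵢ₊₁, σ̂ᵢ₊₂)`, so the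
supports have a common size `c` and consecutive supports meet in a common number `t` of points.
By transitivity the supports cover all `mk` points, and since only consecutive supports meet,
inclusion–exclusion along the path gives `mk + (k - 2) t = (k - 1) c`. The braid relation forces
`c ≤ 2t`, while `supp σ̂₂` contains the disjoint sets `supp σ̂₁ ∩ supp σ̂₂` and
`supp σ̂₂ ∩ supp σ̂₃`, so `2t ≤ c`. Hence `c = 2t`, and then `mk = kt` gives `t = m`.
-/

open Finset

section Braid

variable {G : Type*} [Group G] {a b c : G}

theorem semiconjBy_mul_of_braid (h : a * b * a = b * a * b) : SemiconjBy (a * b) a b := by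
  simp only [SemiconjBy, h, mul_assoc]

theorem semiconjBy_mul_mul_left_of_braid (h : a * b * a = b * a * b) (hac : Commute a c) :
    SemiconjBy (a * b * c) a b := by
  calc a * b * c * a = a * b * a * c := by rw [mul_assoc _ c, ← hac.eq, ← mul_assoc]
    _ = b * (a * b * c) := by rw [h]; group

theorem semiconjBy_mul_mul_right_of_braid (h : b * c * b = c * b * c) (hac : Commute a c) :
    SemiconjBy (a * b * c) b c := by
  calc a * b * c * b = a * c * b * c := by simp only [mul_assoc, ← h]
    _ = c * (a * b * c) := by rw [hac.eq]; group

end Braid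

theorem eq_apply_zero_of_apply_succ_eq {β : Type*} {f : ℕ → β} {N : ℕ}
    (h : ∀ i, i + 1 < N → f (i + 1) = f i) : ∀ i < N, f i = f 0 := by
  intro i hi
  induction i with
  | zero => rfl
  | succ i ih => rw [h i hi, ih (by omega)]

theorem Finset.card_inter_add_card_inter_le {α : Type*} [DecidableEq α] {A B C : Finset α}
    (hAC : Disjoint A C) : #(A ∩ B) + #(B ∩ C) ≤ #B := by
  rw [← card_union_of_disjoint (hAC.mono inter_subset_left inter_subset_right)]
  exact card_le_card (union_subset inter_subset_right inter_subset_left)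

theorem Finset.card_biUnion_range_add_sum_card_inter {α : Type*} [DecidableEq α]
    (A : ℕ → Finset α) (n : ℕ) (hA : ∀ i j, i + 2 ≤ j → j ≤ n → Disjoint (A i) (A j)) :
    #((range (n + 1)).biUnion A) + ∑ i ∈ range n, #(A i ∩ A (i + 1)) =
      ∑ i ∈ range (n + 1), #(A i) := by
  induction n with
  | zero => simp
  | succ n ih =>
    have hmeet : A (n + 1) ∩ (range (n + 1)).biUnion A = A n ∩ A (n + 1) := by
      have hfar : Disjoint (A (n + 1)) ((range n).biUnion A) :=
        (disjoint_biUnion_right _ _ _).mpr fun i hi =>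
          (hA i (n + 1) (by rw [mem_range] at hi; omega) le_rfl).symm
      rw [range_add_one, biUnion_insert, inter_union_distrib_left,
        disjoint_iff_inter_eq_empty.mp hfar, union_empty, inter_comm]
    have hunion := card_union_add_card_inter (A (n + 1)) ((range (n + 1)).biUnion A)
    rw [hmeet] at hunion
    have ih' := ih fun i j hij hj => hA i j hij (by omega)
    rw [sum_range_succ _ (n + 1), sum_range_succ, range_add_one (n := n + 1), biUnion_insert]
    omega

namespace Equiv.Perm

variable {α : Type*} [DecidableEq α] [Fintype α]

theorem support_eq_map_of_semiconjBy {g x y : Perm α} (h : SemiconjBy g x y) :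
    y.support = x.support.map g.toEmbedding := by
  rw [← support_conj, h.eq, mul_inv_cancel_right]

theorem card_support_inter_eq_of_semiconjBy {g x y z : Perm α} (hxy : SemiconjBy g x y)
    (hyz : SemiconjBy g y z) : #(y.support ∩ z.support) = #(x.support ∩ y.support) := by
  rw [← card_map g.toEmbedding (s := x.support ∩ y.support), map_inter,
    ← support_eq_map_of_semiconjBy hxy, ← support_eq_map_of_semiconjBy hyz]

/-- `x` maps `supp x \ supp y` injectively into `supp x ∩ supp y`: if `a ∈ supp x` is fixed by `y`
and `x a` were too, the braid relation evaluated at `a` would give `x (x a) = x a`. -/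
theorem card_support_le_two_mul_card_inter_of_braid {x y : Perm α} (h : x * y * x = y * x * y) :
    #x.support ≤ 2 * #(x.support ∩ y.support) := by
  have hmaps : Set.MapsTo x ↑(x.support \ y.support) ↑(x.support ∩ y.support) := by
    intro a ha
    simp only [coe_sdiff, Set.mem_sdiff, mem_coe, notMem_support] at ha
    obtain ⟨hxa, hya⟩ := ha
    refine mem_inter.mpr ⟨apply_mem_support.mpr hxa, mem_support.mpr fun hyxa => ?_⟩
    have hbraid_at := congrArg (· a) h
    simp only [coe_mul, Function.comp_apply, hya, hyxa] at hbraid_at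
    exact mem_support.mp hxa (x.injective hbraid_at)
  have hle := card_le_card_of_injOn x hmaps x.injective.injOn
  have := card_sdiff_add_card_inter x.support y.support
  omega

theorem exists_mem_support_of_closure_transitive [Nontrivial α] {S : Set (Perm α)}
    (htrans : ∀ x y, ∃ g ∈ Subgroup.closure S, g x = y) (x : α) : ∃ g ∈ S, x ∈ g.support := by
  by_contra! hfix
  have hstab : Subgroup.closure S ≤ MulAction.stabilizer (Perm α) x :=
    (Subgroup.closure_le _).mpr fun g hg => notMem_support.mp (hfix g hg)
  obtain ⟨y, hy⟩ := exists_ne x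
  obtain ⟨g, hg, rfl⟩ := htrans x y
  exact hy (hstab hg)

section BraidSequence

variable {σ : ℕ → Perm α} {n : ℕ}
  (hbraid : ∀ i, i + 1 < n → σ i * σ (i + 1) * σ i = σ (i + 1) * σ i * σ (i + 1))

include hbraid in
theorem card_support_eq_of_braid : ∀ i < n, #(σ i).support = #(σ 0).support :=
  eq_apply_zero_of_apply_succ_eq fun i hi => by
    rw [support_eq_map_of_semiconjBy (semiconjBy_mul_of_braid (hbraid i hi)), card_map]

variable (hdisj : ∀ i j, i + 2 ≤ j → j < n → (σ i).Disjoint (σ j))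

include hbraid hdisj in
theorem card_support_inter_eq_of_braid :
    ∀ i, i + 1 < n → #((σ i).support ∩ (σ (i + 1)).support) = #((σ 0).support ∩ (σ 1).support) := by
  refine fun i hi => eq_apply_zero_of_apply_succ_eq (N := n - 1)
    (f := fun i => #((σ i).support ∩ (σ (i + 1)).support)) (fun j hj => ?_) i (by omega)
  have hcomm : Commute (σ j) (σ (j + 2)) := (hdisj j (j + 2) le_rfl (by omega)).commute
  exact card_support_inter_eq_of_semiconjBy
    (semiconjBy_mul_mul_left_of_braid (hbraid j (by omega)) hcomm)
    (semiconjBy_mul_mul_right_of_braid (hbraid (j + 1) (by omega)) hcomm)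

include hbraid hdisj in
theorem two_mul_card_support_inter_le_of_braid (hn : 3 ≤ n) :
    2 * #((σ 0).support ∩ (σ 1).support) ≤ #(σ 0).support := by
  have h := card_inter_add_card_inter_le (B := (σ 1).support)
    (disjoint_iff_disjoint_support.mp (hdisj 0 2 le_rfl (by omega)))
  rw [card_support_inter_eq_of_braid hbraid hdisj 1 (by omega),
    card_support_eq_of_braid hbraid 1 (by omega)] at h
  omega

include hbraid hdisj in
theorem card_add_mul_card_support_inter_eq_of_braid (hn : 0 < n)
    (hcover : (range n).biUnion (fun i => (σ i).support) = univ) :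
    Fintype.card α + (n - 1) * #((σ 0).support ∩ (σ 1).support) = n * #(σ 0).support := by
  obtain ⟨n, rfl⟩ := Nat.exists_eq_add_one.mpr hn
  have hpath := card_biUnion_range_add_sum_card_inter (fun i => (σ i).support) n
    fun i j hij hj => disjoint_iff_disjoint_support.mp (hdisj i j hij (by omega))
  rw [hcover, card_univ,
    sum_congr rfl fun i hi =>
      card_support_inter_eq_of_braid hbraid hdisj i (by rw [mem_range] at hi; omega),
    sum_congr rfl fun i hi => card_support_eq_of_braid hbraid i (mem_range.mp hi)] at hpath
  simpa only [sum_const, card_range, smul_eq_mul, Nat.add_sub_cancel] using hpath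

end BraidSequence

end Equiv.Perm

open Equiv.Perm in
theorem good_type1_supp_general (k m : ℕ) (hk : 4 ≤ k)
    (s : ℕ → Equiv.Perm (Fin (m * k)))
    (hbraid : ∀ i, 1 ≤ i → i + 1 ≤ k - 1 →
      s i * s (i + 1) * s i = s (i + 1) * s i * s (i + 1))
    (htrans : ∀ x y : Fin (m * k),
      ∃ g ∈ Subgroup.closure {g : Equiv.Perm (Fin (m * k)) | ∃ i, 1 ≤ i ∧ i ≤ k - 1 ∧ g = s i},
        g x = y)
    (hdisj : ∀ i j, 1 ≤ i → i ≤ k - 1 → 1 ≤ j → j ≤ k - 1 → (i + 1 < j ∨ j + 1 < i) →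
      (s i).support ∩ (s j).support = ∅) :
    (s 1).support.card = 2 * m ∧ ((s 1).support ∩ (s 2).support).card = m := by
  have hbraid' (i) (hi : i + 1 < k - 1) := hbraid (i + 1) (by omega) (by omega)
  have hdisj' (i j) (hij : i + 2 ≤ j) (hj : j < k - 1) : (s (i + 1)).Disjoint (s (j + 1)) :=
    disjoint_iff_disjoint_support.mpr <| disjoint_iff_inter_eq_empty.mpr <|
      hdisj _ _ (by omega) (by omega) (by omega) (by omega) (by omega)
  have hcover : (range (k - 1)).biUnion (fun i => (s (i + 1)).support) = univ := by
    refine eq_univ_of_forall fun x => ?_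
    have : Nontrivial (Fin (m * k)) :=
      Fin.nontrivial_iff_two_le.mpr (by nlinarith [Nat.pos_of_mul_pos_right x.pos])
    obtain ⟨_, ⟨i, hi1, hik, rfl⟩, hx⟩ := exists_mem_support_of_closure_transitive htrans x
    exact mem_biUnion.mpr ⟨i - 1, mem_range.mpr (by omega), by rwa [Nat.sub_add_cancel hi1]⟩
  have hcount := card_add_mul_card_support_inter_eq_of_braid hbraid' hdisj' (by omega) hcover
  have hupper := card_support_le_two_mul_card_inter_of_braid (hbraid 1 le_rfl (by omega))
  have hlower := two_mul_card_support_inter_le_of_braid hbraid' hdisj' (by omega)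
  rw [Fintype.card_fin] at hcount
  obtain ⟨q, rfl⟩ : ∃ q, k = q + 4 := ⟨k - 4, by omega⟩
  rw [show q + 4 - 1 = q + 3 by omega, show q + 3 - 1 = q + 2 by omega] at hcount
  simp only [zero_add, Nat.reduceAdd] at hcount hupper hlower
  constructor <;> nlinarith

/-- Let `k ≥ 4`, `m ≥ 1`, and let `ω : B_k → S_{mk}` be a transitive homomorphism
(encoded by the images `s i` of the generators satisfying the braid relations) such
that `supp(σ̂ᵢ) ∩ supp(σ̂ⱼ) = ∅` whenever `|i - j| > 1`.  Then `|supp(σ̂₁)| = 2m` and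
`|supp(σ̂₁) ∩ supp(σ̂₂)| = m`. -/
theorem good_type1_supp (k m : ℕ) (hk : 4 ≤ k) (hm : 1 ≤ m)
    (s : ℕ → Equiv.Perm (Fin (m * k)))
    (hbraid : ∀ i, 1 ≤ i → i + 1 ≤ k - 1 →
      s i * s (i + 1) * s i = s (i + 1) * s i * s (i + 1))
    (hcomm : ∀ i j, 1 ≤ i → j ≤ k - 1 → i + 2 ≤ j → s i * s j = s j * s i)
    (htrans : ∀ x y : Fin (m * k),
      ∃ g ∈ Subgroup.closure {g : Equiv.Perm (Fin (m * k)) | ∃ i, 1 ≤ i ∧ i ≤ k - 1 ∧ g = s i},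
        g x = y)
    (hdisj : ∀ i j, 1 ≤ i → i ≤ k - 1 → 1 ≤ j → j ≤ k - 1 → (i + 1 < j ∨ j + 1 < i) →
      (s i).support ∩ (s j).support = ∅) :
    (s 1).support.card = 2 * m ∧ ((s 1).support ∩ (s 2).support).card = m :=
  good_type1_supp_general k m hk s hbraid htrans hdisj
end

section
/- Let $k\ge 5$ and let $\omega\colon B_k\to S_k$ be a non-cyclic homomorphism with $\omega(\sigma_i)=(i,i+1)$ for all $i\ne k-2$ (with $1\le i\le k-1$). Then $\omega(\sigma_{k-2})$ equals $(k-2,k-1)$ or $(k-2,k)$. -/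
/-!
Braid relations force `ω(σ_{k-2})` to be a transposition: `t a t = a t a` says
`t = (a t) a (a t)⁻¹`, a conjugate of the transposition `a = ω(σ_{k-3})`.
Two transpositions satisfy the braid relation only if their supports meet, and two
commuting transpositions whose supports meet are equal. So `ω(σ_{k-2})` moves a point of
`{k-3, k-2}` and one of `{k-1, k}`, and it cannot move any point `j ≤ k-3`, since it
commutes with a transposition `(i, i+1)` through `j` that it cannot equal.
-/

open Equiv Equiv.Perm

variable {α : Type*} [DecidableEq α]

theorem Equiv.Perm.IsSwap.of_braid {a t : Perm α} (ha : a.IsSwap)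
    (h : t * a * t = a * t * a) : t.IsSwap := by
  obtain ⟨x, y, hxy, rfl⟩ := ha
  refine ⟨(swap x y * t) x, (swap x y * t) y, (swap x y * t).injective.ne hxy, ?_⟩
  rw [swap_apply_apply, ← h]
  group

theorem swap_support_meet_of_braid {u v x y : α} (huv : u ≠ v)
    (h : swap u v * swap x y * swap u v = swap x y * swap u v * swap x y) :
    u = x ∨ u = y ∨ v = x ∨ v = y := by
  by_contra! hne
  obtain ⟨hux, huy, hvx, hvy⟩ := hne
  have := congr($h u)
  simp only [Perm.mul_apply, swap_apply_left, swap_apply_of_ne_of_ne hux huy,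
    swap_apply_of_ne_of_ne hvx hvy, swap_apply_right] at this
  exact huv this

theorem eq_of_commute_swap_swap {u v w : α} (hv : v ≠ u) (hw : w ≠ u)
    (h : Commute (swap u v) (swap u w)) : v = w := by
  by_contra hvw
  have := congr($(h.eq) u)
  simp only [Perm.mul_apply, swap_apply_left, swap_apply_of_ne_of_ne hw (Ne.symm hvw),
    swap_apply_of_ne_of_ne hv hvw] at this
  exact hvw this.symm

theorem Fin.val_le_of_commute_swap_adjacent {k n : ℕ} (hn : 1 ≤ n) (hnk : n < k)
    {u v : Fin k} (huv : u ≠ v)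
    (h : ∀ i (h1 : 1 ≤ i) (h2 : i ≤ n),
      Commute (swap u v) (swap (⟨i - 1, by omega⟩ : Fin k) ⟨i, by omega⟩))
    (hu : (u : ℕ) ≤ n) : (v : ℕ) ≤ n := by
  rcases Nat.eq_zero_or_pos (u : ℕ) with hu0 | hu0
  · have hcomm := h 1 le_rfl hn
    have hu1 : u = ⟨1 - 1, by omega⟩ := Fin.ext hu0
    rw [← hu1] at hcomm
    have := eq_of_commute_swap_swap huv.symm (by simp [Fin.ext_iff, hu0]) hcomm
    simp [this, hn]
  · have hcomm := h u hu0 hu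
    rw [Fin.eta, swap_comm _ u] at hcomm
    have := eq_of_commute_swap_swap huv.symm (by simp [Fin.ext_iff]; omega) hcomm
    simp only [this]
    omega

/-- Let `k ≥ 5` and let `ω : B_k → S_k` be a non-cyclic homomorphism (encoded by the
images `s i` of the generators satisfying the braid relations) with
`ω(σᵢ) = (i, i+1)` for all `i ≠ k-2`, `1 ≤ i ≤ k-1` (written with `Fin k`
zero-indexing: the transposition of `i-1` and `i`).  Then `ω(σ_{k-2})` equals
`(k-2, k-1)` or `(k-2, k)`. -/
theorem missing_mu (k : ℕ) (hk : 5 ≤ k)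
    (s : ℕ → Equiv.Perm (Fin k))
    (hbraid : ∀ i, 1 ≤ i → i + 1 ≤ k - 1 →
      s i * s (i + 1) * s i = s (i + 1) * s i * s (i + 1))
    (hcomm : ∀ i j, 1 ≤ i → j ≤ k - 1 → i + 2 ≤ j → s i * s j = s j * s i)
    (hs : ∀ i (h1 : 1 ≤ i) (h2 : i ≤ k - 1), i ≠ k - 2 →
      s i = Equiv.swap (⟨i - 1, by omega⟩ : Fin k) (⟨i, by omega⟩ : Fin k)) :
    s (k - 2) = Equiv.swap (⟨k - 3, by omega⟩ : Fin k) (⟨k - 2, by omega⟩ : Fin k) ∨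
    s (k - 2) = Equiv.swap (⟨k - 3, by omega⟩ : Fin k) (⟨k - 1, by omega⟩ : Fin k) := by
  have ha : s (k - 3) = swap (⟨k - 4, by omega⟩ : Fin k) ⟨k - 3, by omega⟩ := by
    rw [hs (k - 3) (by omega) (by omega) (by omega)]; congr 2
  have hb : s (k - 1) = swap (⟨k - 2, by omega⟩ : Fin k) ⟨k - 1, by omega⟩ := by
    rw [hs (k - 1) (by omega) (by omega) (by omega)]; congr 2
  have hbraid_a := hbraid (k - 3) (by omega) (by omega)
  have hbraid_b := hbraid (k - 2) (by omega) (by omega)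
  rw [show k - 3 + 1 = k - 2 by omega, ha] at hbraid_a
  rw [show k - 2 + 1 = k - 1 by omega, hb] at hbraid_b
  obtain ⟨u, v, huv, ht⟩ :=
    (swap_isSwap_iff.mpr (by simp [Fin.ext_iff]; omega)).of_braid hbraid_a.symm
  rw [ht] at hbraid_a hbraid_b
  rw [ht]
  have meet_a := swap_support_meet_of_braid huv hbraid_a.symm
  have meet_b := swap_support_meet_of_braid huv hbraid_b
  have hadj : ∀ i (h1 : 1 ≤ i) (h2 : i ≤ k - 4),
      Commute (swap u v) (swap (⟨i - 1, by omega⟩ : Fin k) ⟨i, by omega⟩) := by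
    intro i h1 h2
    rw [← ht, ← hs i h1 (by omega) (by omega)]
    exact (hcomm i (k - 2) h1 (by omega) (by omega)).symm
  have hlarge : k - 3 ≤ (u : ℕ) ∧ k - 3 ≤ (v : ℕ) := by
    have := Fin.val_le_of_commute_swap_adjacent (n := k - 4) (by omega) (by omega) huv hadj
    have := Fin.val_le_of_commute_swap_adjacent (n := k - 4) (by omega) (by omega) huv.symm
      (swap_comm u v ▸ hadj)
    simp only [Fin.ext_iff] at meet_b
    omega
  have hcases : (u = ⟨k - 3, by omega⟩ ∧ (v = ⟨k - 2, by omega⟩ ∨ v = ⟨k - 1, by omega⟩)) ∨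
      (v = ⟨k - 3, by omega⟩ ∧ (u = ⟨k - 2, by omega⟩ ∨ u = ⟨k - 1, by omega⟩)) := by
    simp only [Fin.ext_iff] at meet_a huv ⊢
    omega
  rcases hcases with ⟨hu, hv | hv⟩ | ⟨hv, hu | hu⟩ <;> simp [hu, hv, swap_comm]
end
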